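/- arXiv:1109.4548 — 7 statements merged into one kernel-verified Lean document; each statement's English description precedes it below -/
import Mathlib

section
/- Let b ≥ 2 be an integer, j₁, j₂ ∈ ℕ₀ = {0,1,2,…}, m₁ ∈ {0,…,b^{j₁}−1}, m₂ ∈ {0,…,b^{j₂}−1}, ℓ₁, ℓ₂ ∈ {1,…,b−1}. Then ∫_{[0,1)²} x₁x₂ · h_{j₁,m₁,ℓ₁}(x₁) · h_{j₂,m₂,ℓ₂}(x₂) dx₁dx₂ = b^{−2j₁−2j₂−2} / ((exp(2πiℓ₁/b) − 1)(exp(2πiℓ₂/b) − 1)). -/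
open Finset MeasureTheory

/-- `bexp b ℓ k = exp(2πiℓk/b)`. -/
noncomputable def bexp (b ℓ k : ℕ) : ℂ :=
  Complex.exp (2 * Real.pi * Complex.I * ℓ * k / b)

/-- The `b`-adic Haar function `h_{j,m,ℓ}` on `[0,1)`: it equals `exp(2πiℓk/b)` on
`[b^{−j−1}(bm+k), b^{−j−1}(bm+k+1))` for `k ∈ {0,…,b−1}` and `0` elsewhere. -/
noncomputable def haar (b j m ℓ : ℕ) (x : ℝ) : ℂ :=
  ∑ k ∈ Finset.range b,
    if ((b:ℝ)^(j+1))⁻¹ * ((b:ℝ)*m + k) ≤ x ∧ x < ((b:ℝ)^(j+1))⁻¹ * ((b:ℝ)*m + k + 1)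
    then bexp b ℓ k else 0

lemma omega_pow_b (b ℓ : ℕ) (hb : 0 < b) :
    (Complex.exp (2 * Real.pi * Complex.I * ℓ / b)) ^ b = 1 := by
  rw [← Complex.exp_nat_mul]
  have hb' : (b:ℂ) ≠ 0 := Nat.cast_ne_zero.mpr hb.ne'
  have : (b:ℂ) * (2 * Real.pi * Complex.I * ℓ / b) = ℓ * (2 * Real.pi * Complex.I) := by
    field_simp
  rw [this]
  simpa using Complex.exp_int_mul_two_pi_mul_I (ℓ : ℤ)
lemma omega_ne_one (b ℓ : ℕ) (hb : 2 ≤ b) (h1 : 1 ≤ ℓ) (h2 : ℓ ≤ b - 1) :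
    Complex.exp (2 * Real.pi * Complex.I * ℓ / b) ≠ 1 := by
  intro h
  obtain ⟨n, hn⟩ := Complex.exp_eq_one_iff.mp h
  have hb' : (b:ℂ) ≠ 0 := Nat.cast_ne_zero.mpr (by omega)
  have h2pi : (2 * (Real.pi:ℂ) * Complex.I) ≠ 0 := by
    simp [Real.pi_ne_zero, Complex.I_ne_zero]
  have hd : (2 * (Real.pi:ℂ) * Complex.I) * ((ℓ:ℂ)/b) = (2 * (Real.pi:ℂ) * Complex.I) * n := by
    linear_combination hn
  have hdiv : (ℓ:ℂ)/b = n := mul_left_cancel₀ h2pi hd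
  have hc : (ℓ:ℂ) = n * b := by
    field_simp at hdiv; linear_combination hdiv
  have hz : (ℓ:ℤ) = n * b := by exact_mod_cast hc
  have hℓb : (ℓ:ℤ) ≤ (b:ℤ) - 1 := by
    have : (ℓ:ℤ) ≤ ((b-1 : ℕ) : ℤ) := by exact_mod_cast h2
    omega
  have h1' : (1:ℤ) ≤ ℓ := by exact_mod_cast h1
  have hbz : (2:ℤ) ≤ b := by exact_mod_cast hb
  have hn1 : 1 ≤ n := by nlinarith
  nlinarith
lemma sum_k_pow (x : ℂ) (hx1 : x ≠ 1) (n : ℕ) :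
    (x - 1) * ∑ k ∈ range n, (k:ℂ) * x^k = (n - 1) * x^n - ∑ k ∈ range n, x^k + 1 := by
  induction n with
  | zero => simp
  | succ n ih =>
    rw [Finset.sum_range_succ, Finset.sum_range_succ (f := fun k => x^k)]
    push_cast
    ring_nf
    ring_nf at ih
    linear_combination ih
lemma bexp_eq (b ℓ k : ℕ) :
    bexp b ℓ k = (Complex.exp (2 * Real.pi * Complex.I * ℓ / b))^k := by
  rw [bexp, show (2 * (Real.pi:ℂ) * Complex.I * ℓ * k / b) = k * (2 * Real.pi * Complex.I * ℓ / b) by ring,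
    Complex.exp_nat_mul]
lemma key_sums (b ℓ : ℕ) (hb : 2 ≤ b) (h1 : 1 ≤ ℓ) (h2 : ℓ ≤ b - 1) :
    ∑ k ∈ range b, (k:ℂ) * (Complex.exp (2 * Real.pi * Complex.I * ℓ / b))^k
      = b / (Complex.exp (2 * Real.pi * Complex.I * ℓ / b) - 1) ∧
    ∑ k ∈ range b, (Complex.exp (2 * Real.pi * Complex.I * ℓ / b))^k = 0 := by
  set x := Complex.exp (2 * Real.pi * Complex.I * ℓ / b) with hx
  have hx1 : x ≠ 1 := omega_ne_one b ℓ hb h1 h2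
  have hxb : x ^ b = 1 := omega_pow_b b ℓ (by omega)
  have hgeom : ∑ k ∈ range b, x^k = 0 := by
    rw [geom_sum_eq hx1, hxb]; simp
  refine ⟨?_, hgeom⟩
  have h := sum_k_pow x hx1 b
  rw [hxb, hgeom, mul_one] at h
  rw [eq_div_iff (sub_ne_zero.mpr hx1)]
  linear_combination h
lemma haar_integral (b j m ℓ : ℕ) (hb : 2 ≤ b) (hm : m < b^j)
    (h1 : 1 ≤ ℓ) (h2 : ℓ ≤ b - 1) :
    ∫ x in Set.Ico (0:ℝ) 1, (x:ℂ) * haar b j m ℓ x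
      = (b:ℂ)^(-2*(j:ℤ)-1) / (Complex.exp (2 * Real.pi * Complex.I * ℓ / b) - 1) := by
  have hb0 : (0:ℝ) < b := by positivity
  set c : ℝ := ((b:ℝ)^(j+1))⁻¹ with hc
  have hc0 : 0 < c := by positivity
  -- rewrite integrand
  have hfun : ∀ x : ℝ, (x:ℂ) * haar b j m ℓ x
      = ∑ k ∈ range b, Set.indicator (Set.Ico (c*((b:ℝ)*m+k)) (c*((b:ℝ)*m+k+1)))
          (fun x : ℝ => bexp b ℓ k * (x:ℂ)) x := by
    intro x
    rw [haar, Finset.mul_sum]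
    refine Finset.sum_congr rfl fun k _ => ?_
    simp only [Set.indicator_apply, Set.mem_Ico, ← hc]
    split_ifs <;> simp [mul_comm]
  simp_rw [hfun]
  -- integrability of each term
  have hint : ∀ k ∈ range b, Integrable
      (Set.indicator (Set.Ico (c*((b:ℝ)*m+k)) (c*((b:ℝ)*m+k+1)))
          (fun x : ℝ => bexp b ℓ k * (x:ℂ))) (volume.restrict (Set.Ico (0:ℝ) 1)) := by
    intro k _
    refine Integrable.indicator ?_ measurableSet_Ico
    have : IntegrableOn (fun x : ℝ => bexp b ℓ k * (x:ℂ)) (Set.Icc (0:ℝ) 1) := by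
      exact ((continuous_const.mul Complex.continuous_ofReal).continuousOn).integrableOn_Icc
    exact this.mono_set Set.Ico_subset_Icc_self
  rw [integral_finset_sum _ hint]
  -- bounds
  have hub : ∀ k ∈ range b, c*((b:ℝ)*m+k+1) ≤ 1 := by
    intro k hk
    rw [Finset.mem_range] at hk
    have hN : b*m + k + 1 ≤ b^(j+1) := by
      calc b*m + k + 1 ≤ b*m + b := by omega
        _ = b*(m+1) := by ring
        _ ≤ b*b^j := Nat.mul_le_mul_left b (by omega)
        _ = b^(j+1) := by ring
    have hNR : (b:ℝ)*m + k + 1 ≤ (b:ℝ)^(j+1) := by exact_mod_cast hN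
    calc c*((b:ℝ)*m+k+1) ≤ c * (b:ℝ)^(j+1) := by
          exact mul_le_mul_of_nonneg_left hNR hc0.le
      _ = 1 := by rw [hc]; field_simp
  -- evaluate each term
  have hterm : ∀ k ∈ range b,
      (∫ x in Set.Ico (0:ℝ) 1, Set.indicator (Set.Ico (c*((b:ℝ)*m+k)) (c*((b:ℝ)*m+k+1)))
          (fun x : ℝ => bexp b ℓ k * (x:ℂ)) x)
      = bexp b ℓ k * (((c*((b:ℝ)*m+k+1))^2 - (c*((b:ℝ)*m+k))^2)/2 : ℝ) := by
    intro k hk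
    have hsub : Set.Ico (c*((b:ℝ)*m+k)) (c*((b:ℝ)*m+k+1)) ⊆ Set.Ico (0:ℝ) 1 :=
      Set.Ico_subset_Ico (by positivity) (hub k hk)
    rw [integral_indicator measurableSet_Ico, Measure.restrict_restrict measurableSet_Ico,
      Set.inter_eq_self_of_subset_left hsub]
    have hle : c*((b:ℝ)*m+k) ≤ c*((b:ℝ)*m+k+1) := by nlinarith
    rw [setIntegral_congr_set Ico_ae_eq_Ioc, ← intervalIntegral.integral_of_le hle,
      intervalIntegral.integral_const_mul]
    congr 1
    rw [show (fun x : ℝ => (x:ℂ)) = (fun x : ℝ => ((id x : ℝ) : ℂ)) from rfl,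
      intervalIntegral.integral_ofReal]
    norm_num [integral_id]
  rw [Finset.sum_congr rfl hterm]
  obtain ⟨hS1, hS0⟩ := key_sums b ℓ hb h1 h2
  set ω := Complex.exp (2 * Real.pi * Complex.I * ℓ / b) with hω
  set cC : ℂ := ((b:ℂ)^(j+1))⁻¹ with hcC
  have hstep : ∀ k ∈ range b,
      bexp b ℓ k * (((c*((b:ℝ)*m+k+1))^2 - (c*((b:ℝ)*m+k))^2)/2 : ℝ)
      = (cC^2*((b:ℂ)*m + 1/2)) * ω^k + cC^2 * ((k:ℂ)*ω^k) := by
    intro k _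
    rw [bexp_eq, ← hω, hc, hcC]
    push_cast
    ring
  rw [Finset.sum_congr rfl hstep, Finset.sum_add_distrib, ← Finset.mul_sum, ← Finset.mul_sum,
    hS0, hS1, mul_zero, zero_add, mul_div_assoc']
  congr 1
  have hbC : (b:ℂ) ≠ 0 := Nat.cast_ne_zero.mpr (by omega)
  have hzp : (b:ℂ)^(-2*(j:ℤ)-1) = ((b:ℂ)^(2*j+1))⁻¹ := by
    rw [← zpow_natCast (b:ℂ) (2*j+1), ← zpow_neg]
    congr 1
    push_cast
    ring
  rw [hzp, hcC]
  field_simp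
  ring

/-- The Haar coefficient of `x₁x₂` for indices `j₁, j₂ ∈ ℕ₀`. -/
theorem haar_coeff_of_volume (b : ℕ) (hb : 2 ≤ b) (j₁ j₂ m₁ m₂ ℓ₁ ℓ₂ : ℕ)
    (hm₁ : m₁ < b ^ j₁) (hm₂ : m₂ < b ^ j₂)
    (hℓ₁ : 1 ≤ ℓ₁) (hℓ₁' : ℓ₁ ≤ b - 1) (hℓ₂ : 1 ≤ ℓ₂) (hℓ₂' : ℓ₂ ≤ b - 1) :
    (∫ x₁ in Set.Ico (0:ℝ) 1, ∫ x₂ in Set.Ico (0:ℝ) 1,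
        (x₁ : ℂ) * (x₂ : ℂ) * haar b j₁ m₁ ℓ₁ x₁ * haar b j₂ m₂ ℓ₂ x₂)
      = (b : ℂ) ^ (-2*(j₁:ℤ) - 2*(j₂:ℤ) - 2) /
          ((Complex.exp (2 * Real.pi * Complex.I * ℓ₁ / b) - 1) *
           (Complex.exp (2 * Real.pi * Complex.I * ℓ₂ / b) - 1)) := by
  have h1' := haar_integral b j₁ m₁ ℓ₁ hb hm₁ hℓ₁ hℓ₁'
  have h2' := haar_integral b j₂ m₂ ℓ₂ hb hm₂ hℓ₂ hℓ₂'
  have hbC : (b:ℂ) ≠ 0 := Nat.cast_ne_zero.mpr (by omega)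
  have inner : ∀ x₁ : ℝ,
      (∫ x₂ in Set.Ico (0:ℝ) 1, (x₁:ℂ) * (x₂:ℂ) * haar b j₁ m₁ ℓ₁ x₁ * haar b j₂ m₂ ℓ₂ x₂)
      = ((x₁:ℂ) * haar b j₁ m₁ ℓ₁ x₁) *
        ((b:ℂ)^(-2*(j₂:ℤ)-1) / (Complex.exp (2 * Real.pi * Complex.I * ℓ₂ / b) - 1)) := by
    intro x₁
    rw [← h2', ← integral_const_mul]
    congr 1
    ext x₂
    ring
  simp_rw [inner]
  rw [integral_mul_const, h1', div_mul_div_comm, ← zpow_add₀ hbC,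
    show (-2*(j₁:ℤ)-1) + (-2*(j₂:ℤ)-1) = -2*(j₁:ℤ) - 2*(j₂:ℤ) - 2 from by ring]
end

section
/- Let b ≥ 2 be an integer, j₁ ∈ ℕ₀ = {0,1,2,…}, m₁ ∈ {0,…,b^{j₁}−1}, ℓ₁ ∈ {1,…,b−1}. Then ∫_{[0,1)²} x₁x₂ · h_{j₁,m₁,ℓ₁}(x₁) dx₁dx₂ = (1/2) · b^{−2j₁−1} / (exp(2πiℓ₁/b) − 1). -/
open Finset MeasureTheory

/-!
The inner integral over `x₂` contributes the factor `1/2`. On the `k`-th subinterval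
`[δ(bm+k), δ(bm+k+1))` of `I_{j,m}`, with `δ = b^{-j-1}`, the Haar function is the constant
`ωᵏ`, `ω = exp(2πiℓ/b)`, and `∫ x dx = δ²(bm+k+1/2)` there. Since `ω` is a `b`-th root of
unity different from `1`, `∑ ωᵏ = 0` and `∑ k ωᵏ = b/(ω-1)`, leaving
`δ² b/(ω-1) = b^{-2j-1}/(ω-1)`.
-/

section RootOfUnitySums

variable {K : Type*} [Field K]

lemma sub_one_mul_sum_range_natCast_mul_pow (x : K) (n : ℕ) :
    (x - 1) * ∑ k ∈ range n, (k : K) * x ^ k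
      = ((n : K) - 1) * x ^ n - ∑ k ∈ range n, x ^ k + 1 := by
  induction n with
  | zero => simp
  | succ n ih =>
    rw [sum_range_succ, sum_range_succ, mul_add, ih]
    push_cast
    ring

lemma geom_sum_eq_zero_of_pow_eq_one {x : K} {n : ℕ} (hx : x ≠ 1) (hxn : x ^ n = 1) :
    ∑ k ∈ range n, x ^ k = 0 := by
  rw [geom_sum_eq hx, hxn, sub_self, zero_div]

lemma sum_range_natCast_mul_pow_of_pow_eq_one {x : K} {n : ℕ} (hx : x ≠ 1) (hxn : x ^ n = 1) :
    ∑ k ∈ range n, (k : K) * x ^ k = n / (x - 1) := by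
  have h := sub_one_mul_sum_range_natCast_mul_pow x n
  rw [hxn, geom_sum_eq_zero_of_pow_eq_one hx hxn] at h
  rw [eq_div_iff (sub_ne_zero.mpr hx)]
  linear_combination h

lemma sum_range_add_natCast_mul_pow_of_pow_eq_one {x : K} {n : ℕ} (hx : x ≠ 1) (hxn : x ^ n = 1)
    (c : K) : ∑ k ∈ range n, (c + k) * x ^ k = n / (x - 1) := by
  rw [sum_congr rfl fun (k : ℕ) _ ↦ add_mul c (k : K) (x ^ k), sum_add_distrib, ← mul_sum,
    geom_sum_eq_zero_of_pow_eq_one hx hxn, mul_zero, zero_add,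
    sum_range_natCast_mul_pow_of_pow_eq_one hx hxn]

end RootOfUnitySums

lemma bexp_eq_pow (b ℓ k : ℕ) :
    bexp b ℓ k = Complex.exp (2 * Real.pi * Complex.I * ℓ / b) ^ k := by
  rw [bexp, ← Complex.exp_nat_mul]
  ring_nf

lemma exp_two_pi_I_mul_div_eq_pow (b ℓ : ℕ) :
    Complex.exp (2 * Real.pi * Complex.I * ℓ / b)
      = Complex.exp (2 * Real.pi * Complex.I / b) ^ ℓ := by
  rw [← Complex.exp_nat_mul]
  ring_nf

lemma exp_two_pi_I_mul_div_pow_eq_one (b ℓ : ℕ) :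
    Complex.exp (2 * Real.pi * Complex.I * ℓ / b) ^ b = 1 := by
  obtain rfl | hb := eq_or_ne b 0
  · exact pow_zero _
  rw [exp_two_pi_I_mul_div_eq_pow, pow_right_comm, (Complex.isPrimitiveRoot_exp b hb).pow_eq_one,
    one_pow]

lemma exp_two_pi_I_mul_div_ne_one {b ℓ : ℕ} (hℓ : ℓ ≠ 0) (hℓb : ℓ < b) :
    Complex.exp (2 * Real.pi * Complex.I * ℓ / b) ≠ 1 := by
  rw [exp_two_pi_I_mul_div_eq_pow]
  exact (Complex.isPrimitiveRoot_exp b (by omega)).pow_ne_one_of_pos_of_lt hℓ hℓb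

def haarCell (b j m k : ℕ) : Set ℝ :=
  Set.Ico (((b:ℝ)^(j+1))⁻¹ * ((b:ℝ)*m + k)) (((b:ℝ)^(j+1))⁻¹ * ((b:ℝ)*m + k + 1))

lemma measurableSet_haarCell (b j m k : ℕ) : MeasurableSet (haarCell b j m k) :=
  measurableSet_Ico

lemma haar_eq_sum_indicator (b j m ℓ : ℕ) (x : ℝ) :
    haar b j m ℓ x = ∑ k ∈ range b, (haarCell b j m k).indicator (fun _ ↦ bexp b ℓ k) x := by
  simp only [haar, haarCell, Set.indicator_apply, Set.mem_Ico]

lemma haarCell_subset_Ico {b j m k : ℕ} (hm : m < b ^ j) (hk : k < b) :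
    haarCell b j m k ⊆ Set.Ico 0 1 := by
  have hb : (0:ℝ) < b := by exact_mod_cast hk.trans_le' (Nat.zero_le k)
  have hcell : b * m + k + 1 ≤ b ^ (j+1) := by
    rw [pow_succ']
    nlinarith
  refine Set.Ico_subset_Ico (by positivity) ((inv_mul_le_iff₀ (by positivity)).mpr ?_)
  rw [mul_one]
  exact_mod_cast hcell

lemma setIntegral_Ico_ofReal {a c : ℝ} (h : a ≤ c) :
    ∫ x in Set.Ico a c, (x : ℂ) = ((c : ℂ)^2 - (a : ℂ)^2) / 2 := by
  rw [integral_complex_ofReal, Measure.restrict_congr_set Ico_ae_eq_Ioc,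
    ← intervalIntegral.integral_of_le h, integral_id]
  push_cast
  ring

lemma setIntegral_Ico_zero_one_const_mul_ofReal (c : ℂ) :
    ∫ x in Set.Ico (0:ℝ) 1, c * (x : ℂ) = c / 2 := by
  rw [integral_const_mul, setIntegral_Ico_ofReal zero_le_one]
  push_cast
  ring

lemma setIntegral_haarCell_ofReal (b j m k : ℕ) :
    ∫ x in haarCell b j m k, (x : ℂ) = ((b:ℂ)^(j+1))⁻¹ ^ 2 * (b * m + 1/2 + k) := by
  rw [haarCell, setIntegral_Ico_ofReal (mul_le_mul_of_nonneg_left (by linarith) (by positivity))]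
  push_cast
  ring

lemma setIntegral_Ico_mul_haar {g : ℝ → ℂ} (hg : IntegrableOn g (Set.Ico 0 1))
    {b j m : ℕ} (hm : m < b ^ j) (ℓ : ℕ) :
    ∫ x in Set.Ico 0 1, g x * haar b j m ℓ x
      = ∑ k ∈ range b, (∫ x in haarCell b j m k, g x) * bexp b ℓ k := by
  simp_rw [haar_eq_sum_indicator, mul_sum, ← Set.indicator_mul_right]
  rw [integral_finsetSum _ fun k _ ↦ (hg.mul_const _).indicator (measurableSet_haarCell b j m k)]
  refine sum_congr rfl fun k hk ↦ ?_
  rw [setIntegral_indicator (measurableSet_haarCell b j m k),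
    Set.inter_eq_self_of_subset_right (haarCell_subset_Ico hm (mem_range.mp hk)),
    integral_mul_const]

theorem haar_coeff_of_volume_mixed_general (b : ℕ) (j₁ m₁ ℓ₁ : ℕ)
    (hm₁ : m₁ < b ^ j₁) (hℓ₁ : 1 ≤ ℓ₁) (hℓ₁' : ℓ₁ ≤ b - 1) :
    (∫ x₁ in Set.Ico (0:ℝ) 1, ∫ x₂ in Set.Ico (0:ℝ) 1,
        (x₁ : ℂ) * (x₂ : ℂ) * haar b j₁ m₁ ℓ₁ x₁)
      = (1/2) * (b : ℂ) ^ (-2*(j₁:ℤ) - 1) /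
          (Complex.exp (2 * Real.pi * Complex.I * ℓ₁ / b) - 1) := by
  have hb : b ≠ 0 := by omega
  have hω : Complex.exp (2 * Real.pi * Complex.I * ℓ₁ / b) ≠ 1 :=
    exp_two_pi_I_mul_div_ne_one (by omega) (by omega)
  have hωb := exp_two_pi_I_mul_div_pow_eq_one b ℓ₁
  have hinner : ∀ x₁ : ℝ, ∫ x₂ in Set.Ico (0:ℝ) 1, (x₁ : ℂ) * x₂ * haar b j₁ m₁ ℓ₁ x₁
      = x₁ * haar b j₁ m₁ ℓ₁ x₁ / 2 := fun x₁ ↦ by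
    simp_rw [mul_right_comm (x₁ : ℂ) _ (haar b j₁ m₁ ℓ₁ x₁)]
    exact setIntegral_Ico_zero_one_const_mul_ofReal _
  simp_rw [hinner]
  rw [integral_div, setIntegral_Ico_mul_haar
    (Complex.continuous_ofReal.integrableOn_Icc.mono_set Set.Ico_subset_Icc_self) hm₁]
  simp only [setIntegral_haarCell_ofReal, bexp_eq_pow,
    mul_assoc _ _ (Complex.exp _ ^ _)]
  rw [← mul_sum, sum_range_add_natCast_mul_pow_of_pow_eq_one hω hωb]
  have hpow : (b : ℂ) ^ (-2*(j₁:ℤ) - 1) = ((b:ℂ)^(j₁+1))⁻¹ ^ 2 * b := by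
    rw [show -2*(j₁:ℤ) - 1 = -(2*(j₁+1) : ℕ) + 1 by push_cast; ring,
      zpow_add₀ (by exact_mod_cast hb), zpow_neg, zpow_natCast, zpow_one, pow_mul']
    simp
  rw [hpow]
  ring

/-- The Haar coefficient of `x₁x₂` for index `j = (j₁, −1)`, the second factor
being `h_{−1,0,1} = 1_{[0,1)}`. -/
theorem haar_coeff_of_volume_mixed (b : ℕ) (hb : 2 ≤ b) (j₁ m₁ ℓ₁ : ℕ)
    (hm₁ : m₁ < b ^ j₁) (hℓ₁ : 1 ≤ ℓ₁) (hℓ₁' : ℓ₁ ≤ b - 1) :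
    (∫ x₁ in Set.Ico (0:ℝ) 1, ∫ x₂ in Set.Ico (0:ℝ) 1,
        (x₁ : ℂ) * (x₂ : ℂ) * haar b j₁ m₁ ℓ₁ x₁)
      = (1/2) * (b : ℂ) ^ (-2*(j₁:ℤ) - 1) /
          (Complex.exp (2 * Real.pi * Complex.I * ℓ₁ / b) - 1) :=
  haar_coeff_of_volume_mixed_general b j₁ m₁ ℓ₁ hm₁ hℓ₁ hℓ₁'
end

section
/- Let b ≥ 2 be an integer, j₁, j₂ ∈ ℕ₀ = {0,1,2,…}, m₁ ∈ {0,…,b^{j₁}−1}, m₂ ∈ {0,…,b^{j₂}−1}, ℓ₁, ℓ₂ ∈ {1,…,b−1}, and let z = (z₁,z₂) lie in the interior of I_{j₁,m₁} × I_{j₂,m₂}. Let k₁, k₂ ∈ {0,…,b−1} be such that z₁ ∈ [b^{−j₁−1}(bm₁+k₁), b^{−j₁−1}(bm₁+k₁+1)) and z₂ ∈ [b^{−j₂−1}(bm₂+k₂), b^{−j₂−1}(bm₂+k₂+1)). Then ∫_{[0,1)²} 1[x₁ > z₁]·1[x₂ > z₂] · h_{j₁,m₁,ℓ₁}(x₁)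 · h_{j₂,m₂,ℓ₂}(x₂) dx₁dx₂ = b^{−j₁−j₂−2} · [(bm₁+k₁+1−b^{j₁+1}z₁)·exp(2πik₁ℓ₁/b) + ∑_{r₁=k₁+1}^{b−1} exp(2πir₁ℓ₁/b)] · [(bm₂+k₂+1−b^{j₂+1}z₂)·exp(2πik₂ℓ₂/b) + ∑_{r₂=k₂+1}^{b−1} exp(2πir₂ℓ₂/b)]. -/
/-!
The integrand is a product of a function of `x₁` and a function of `x₂`, so the double
integral factors. In one variable, `1[x > z] h_{j,m,ℓ}(x)` is a step function: on the `r`-th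
subinterval `[b^{-j-1}(bm+r), b^{-j-1}(bm+r+1))` it equals `exp(2πiℓr/b)` to the right of `z`.
The part of that subinterval to the right of `z` is empty for `r < k`, has length
`b^{-j-1}(bm+k+1) - z` for `r = k`, and is the whole subinterval, of length `b^{-j-1}`, for `r > k`.
-/

open Finset MeasureTheory

theorem Real.volume_real_Ico_inter_Ioi (p q z : ℝ) :
    volume.real (Set.Ico p q ∩ Set.Ioi z) = max (q - max p z) 0 := by
  have lower : Set.Ioo (max p z) q ⊆ Set.Ico p q ∩ Set.Ioi z := fun x hx =>
    ⟨⟨(le_max_left p z).trans hx.1.le, hx.2⟩, (le_max_right p z).trans_lt hx.1⟩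
  have upper : Set.Ico p q ∩ Set.Ioi z ⊆ Set.Ico (max p z) q := fun x hx =>
    ⟨max_le hx.1.1 hx.2.le, hx.1.2⟩
  have : volume (Set.Ico p q ∩ Set.Ioi z) = ENNReal.ofReal (q - max p z) :=
    le_antisymm (Real.volume_Ico ▸ measure_mono upper) (Real.volume_Ioo ▸ measure_mono lower)
  rw [measureReal_def, this, ENNReal.toReal_ofReal']

theorem integral_integral_mul {𝕜 α β : Type*} [RCLike 𝕜] [MeasurableSpace α]
    [MeasurableSpace β] (μ : Measure α) (ν : Measure β) (f : α → 𝕜) (g : β → 𝕜) :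
    ∫ x, ∫ y, f x * g y ∂ν ∂μ = (∫ x, f x ∂μ) * ∫ y, g y ∂ν := by
  simp_rw [integral_const_mul]
  exact integral_mul_const _ _

theorem sum_range_clippedLength_smul {E : Type*} [AddCommGroup E] [Module ℝ E] {c t z : ℝ}
    (hc : 0 ≤ c) {n k : ℕ} (hk : k < n) (hz : c * (t + k) ≤ z ∧ z < c * (t + k + 1))
    (f : ℕ → E) :
    ∑ r ∈ range n, max (c * (t + r + 1) - max (c * (t + r)) z) 0 • f r
      = (c * (t + k + 1) - z) • f k + ∑ r ∈ Ico (k + 1) n, c • f r := by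
  have length_lt {r : ℕ} (hr : r < k) : max (c * (t + r + 1) - max (c * (t + r)) z) 0 = 0 := by
    have : (r : ℝ) + 1 ≤ k := by exact_mod_cast hr
    rw [max_eq_right]
    nlinarith [le_max_right (c * (t + r)) z]
  have length_eq : max (c * (t + k + 1) - max (c * (t + k)) z) 0 = c * (t + k + 1) - z := by
    rw [max_eq_right hz.1, max_eq_left (by linarith [hz.2])]
  have length_gt {r : ℕ} (hr : k < r) : max (c * (t + r + 1) - max (c * (t + r)) z) 0 = c := by
    have : (k : ℝ) + 1 ≤ r := by exact_mod_cast hr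
    rw [max_eq_left (show z ≤ c * (t + r) by nlinarith), max_eq_left (by nlinarith)]
    ring
  rw [range_eq_Ico, ← sum_Ico_consecutive _ (Nat.zero_le (k + 1)) hk,
    sum_Ico_succ_top (Nat.zero_le k),
    sum_eq_zero fun r hr => by rw [length_lt (mem_Ico.1 hr).2, zero_smul], zero_add, length_eq]
  exact congrArg _ (sum_congr rfl fun r hr => by rw [length_gt (mem_Ico.1 hr).1])

theorem setIntegral_Ico_ite_lt_mul_sum_ite {c t : ℝ} (hc : 0 ≤ c) (ht : 0 ≤ t) {n : ℕ}
    (hn : c * (t + n) ≤ 1) (z : ℝ) (f : ℕ → ℂ) :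
    ∫ x in Set.Ico (0:ℝ) 1, (if z < x then (1:ℂ) else 0) *
        ∑ r ∈ range n, (if c * (t + r) ≤ x ∧ x < c * (t + r + 1) then f r else 0)
      = ∑ r ∈ range n, max (c * (t + r + 1) - max (c * (t + r)) z) 0 • f r := by
  set S : ℕ → Set ℝ := fun r => Set.Ico (c * (t + r)) (c * (t + r + 1)) ∩ Set.Ioi z
  have hS (r : ℕ) : MeasurableSet (S r) := measurableSet_Ico.inter measurableSet_Ioi
  have integrand_eq (x : ℝ) : (if z < x then (1:ℂ) else 0) *
      ∑ r ∈ range n, (if c * (t + r) ≤ x ∧ x < c * (t + r + 1) then f r else 0)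
        = ∑ r ∈ range n, (S r).indicator (fun _ => f r) x := by
    rw [mul_sum]
    refine sum_congr rfl fun r _ => ?_
    by_cases hx : z < x <;> by_cases hr : c * (t + r) ≤ x ∧ x < c * (t + r + 1) <;>
      simp [S, Set.indicator, hx, hr]
  have S_subset {r : ℕ} (hr : r < n) : S r ⊆ Set.Ico 0 1 := by
    have : (r : ℝ) + 1 ≤ n := by exact_mod_cast hr
    rintro x ⟨⟨h₀, h₁⟩, -⟩
    constructor <;> nlinarith
  simp_rw [integrand_eq]
  rw [integral_finsetSum _ fun r _ => (integrable_const (f r)).indicator (hS r)]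
  refine sum_congr rfl fun r hr => ?_
  rw [integral_indicator_const _ (hS r), measureReal_restrict_apply (hS r),
    Set.inter_eq_left.2 (S_subset (mem_range.1 hr)), Real.volume_real_Ico_inter_Ioi]

theorem setIntegral_Ico_ite_lt_mul_haar {b j m k : ℕ} (ℓ : ℕ) (hm : m < b ^ j) (hk : k < b) {z : ℝ}
    (hz : ((b:ℝ)^(j+1))⁻¹ * ((b:ℝ)*m + k) ≤ z ∧ z < ((b:ℝ)^(j+1))⁻¹ * ((b:ℝ)*m + k + 1)) :
    ∫ x in Set.Ico (0:ℝ) 1, (if z < x then (1:ℂ) else 0) * haar b j m ℓ x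
      = (b:ℂ)^(-(j:ℤ)-1) * (((b:ℂ)*m + k + 1 - (b:ℂ)^(j+1) * (z:ℂ)) * bexp b ℓ k +
          ∑ r ∈ Icc (k+1) (b-1), bexp b ℓ r) := by
  have hb : (0:ℝ) < b := by exact_mod_cast (Nat.zero_le k).trans_lt hk
  have box_le_one : ((b:ℝ)^(j+1))⁻¹ * ((b:ℝ)*m + b) ≤ 1 := by
    have : (m:ℝ) + 1 ≤ (b:ℝ)^j := by exact_mod_cast hm
    rw [inv_mul_le_iff₀ (by positivity), pow_succ]
    nlinarith
  simp only [haar]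
  rw [setIntegral_Ico_ite_lt_mul_sum_ite (by positivity) (by positivity) box_le_one,
    sum_range_clippedLength_smul (by positivity) hk hz,
    show Ico (k + 1) b = Icc (k + 1) (b - 1) by ext; simp; omega,
    show -(j:ℤ) - 1 = -((j + 1 : ℕ) : ℤ) by push_cast; ring, zpow_neg, zpow_natCast]
  simp only [Complex.real_smul, ← mul_sum]
  have : (b:ℂ) ≠ 0 := by exact_mod_cast hb.ne'
  push_cast
  field_simp

theorem haar_coeff_indicator_in_box_general (b : ℕ) (j₁ j₂ m₁ m₂ ℓ₁ ℓ₂ : ℕ)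
    (hm₁ : m₁ < b ^ j₁) (hm₂ : m₂ < b ^ j₂)
    (z₁ z₂ : ℝ)
    (k₁ k₂ : ℕ) (hk₁ : k₁ < b) (hk₂ : k₂ < b)
    (hzk₁ : ((b:ℝ)^(j₁+1))⁻¹ * ((b:ℝ)*m₁ + k₁) ≤ z₁ ∧
            z₁ < ((b:ℝ)^(j₁+1))⁻¹ * ((b:ℝ)*m₁ + k₁ + 1))
    (hzk₂ : ((b:ℝ)^(j₂+1))⁻¹ * ((b:ℝ)*m₂ + k₂) ≤ z₂ ∧
            z₂ < ((b:ℝ)^(j₂+1))⁻¹ * ((b:ℝ)*m₂ + k₂ + 1)) :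
    (∫ x₁ in Set.Ico (0:ℝ) 1, ∫ x₂ in Set.Ico (0:ℝ) 1,
        (if z₁ < x₁ then (1:ℂ) else 0) * (if z₂ < x₂ then (1:ℂ) else 0) *
          haar b j₁ m₁ ℓ₁ x₁ * haar b j₂ m₂ ℓ₂ x₂)
      = (b : ℂ) ^ (-(j₁:ℤ) - (j₂:ℤ) - 2) *
        (((b:ℂ)*m₁ + k₁ + 1 - (b:ℂ)^(j₁+1) * (z₁:ℂ)) * bexp b ℓ₁ k₁ +
          ∑ r₁ ∈ Finset.Icc (k₁+1) (b-1), bexp b ℓ₁ r₁) *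
        (((b:ℂ)*m₂ + k₂ + 1 - (b:ℂ)^(j₂+1) * (z₂:ℂ)) * bexp b ℓ₂ k₂ +
          ∑ r₂ ∈ Finset.Icc (k₂+1) (b-1), bexp b ℓ₂ r₂) := by
  have hb : (b:ℂ) ≠ 0 := by exact_mod_cast ((Nat.zero_le k₁).trans_lt hk₁).ne'
  have regroup (x₁ x₂ : ℝ) :
      (if z₁ < x₁ then (1:ℂ) else 0) * (if z₂ < x₂ then (1:ℂ) else 0) *
        haar b j₁ m₁ ℓ₁ x₁ * haar b j₂ m₂ ℓ₂ x₂
      = ((if z₁ < x₁ then (1:ℂ) else 0) * haar b j₁ m₁ ℓ₁ x₁) *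
        ((if z₂ < x₂ then (1:ℂ) else 0) * haar b j₂ m₂ ℓ₂ x₂) := by ring
  simp_rw [regroup]
  rw [integral_integral_mul, setIntegral_Ico_ite_lt_mul_haar ℓ₁ hm₁ hk₁ hzk₁,
    setIntegral_Ico_ite_lt_mul_haar ℓ₂ hm₂ hk₂ hzk₂,
    show -(j₁:ℤ) - j₂ - 2 = (-(j₁:ℤ) - 1) + (-(j₂:ℤ) - 1) by ring, zpow_add₀ hb]
  ring

/-- The Haar coefficient of the indicator of `(z₁,1) × (z₂,1)` when `z` lies in the
interior of the `b`-adic box `I_{j₁,m₁} × I_{j₂,m₂}`, with `z` in the `(k₁,k₂)`-subbox. -/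
theorem haar_coeff_indicator_in_box (b : ℕ) (hb : 2 ≤ b) (j₁ j₂ m₁ m₂ ℓ₁ ℓ₂ : ℕ)
    (hm₁ : m₁ < b ^ j₁) (hm₂ : m₂ < b ^ j₂)
    (hℓ₁ : 1 ≤ ℓ₁) (hℓ₁' : ℓ₁ ≤ b - 1) (hℓ₂ : 1 ≤ ℓ₂) (hℓ₂' : ℓ₂ ≤ b - 1)
    (z₁ z₂ : ℝ)
    (hz₁ : z₁ ∈ Set.Ioo ((b:ℝ)^(-(j₁:ℤ)) * m₁) ((b:ℝ)^(-(j₁:ℤ)) * (m₁ + 1)))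
    (hz₂ : z₂ ∈ Set.Ioo ((b:ℝ)^(-(j₂:ℤ)) * m₂) ((b:ℝ)^(-(j₂:ℤ)) * (m₂ + 1)))
    (k₁ k₂ : ℕ) (hk₁ : k₁ < b) (hk₂ : k₂ < b)
    (hzk₁ : ((b:ℝ)^(j₁+1))⁻¹ * ((b:ℝ)*m₁ + k₁) ≤ z₁ ∧
            z₁ < ((b:ℝ)^(j₁+1))⁻¹ * ((b:ℝ)*m₁ + k₁ + 1))
    (hzk₂ : ((b:ℝ)^(j₂+1))⁻¹ * ((b:ℝ)*m₂ + k₂) ≤ z₂ ∧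
            z₂ < ((b:ℝ)^(j₂+1))⁻¹ * ((b:ℝ)*m₂ + k₂ + 1)) :
    (∫ x₁ in Set.Ico (0:ℝ) 1, ∫ x₂ in Set.Ico (0:ℝ) 1,
        (if z₁ < x₁ then (1:ℂ) else 0) * (if z₂ < x₂ then (1:ℂ) else 0) *
          haar b j₁ m₁ ℓ₁ x₁ * haar b j₂ m₂ ℓ₂ x₂)
      = (b : ℂ) ^ (-(j₁:ℤ) - (j₂:ℤ) - 2) *
        (((b:ℂ)*m₁ + k₁ + 1 - (b:ℂ)^(j₁+1) * (z₁:ℂ)) * bexp b ℓ₁ k₁ +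
          ∑ r₁ ∈ Finset.Icc (k₁+1) (b-1), bexp b ℓ₁ r₁) *
        (((b:ℂ)*m₂ + k₂ + 1 - (b:ℂ)^(j₂+1) * (z₂:ℂ)) * bexp b ℓ₂ k₂ +
          ∑ r₂ ∈ Finset.Icc (k₂+1) (b-1), bexp b ℓ₂ r₂) :=
  haar_coeff_indicator_in_box_general b j₁ j₂ m₁ m₂ ℓ₁ ℓ₂ hm₁ hm₂ z₁ z₂ k₁ k₂ hk₁ hk₂ hzk₁ hzk₂
end

section
/- Let b ≥ 2 and n ≥ 1 be integers and define z_n := ∑_{t ∈ {0,…,b−1}ⁿ} ∑_{i=1}^{n} ∑_{j=1}^{n} b^{i−j} t_i t_j, where the outer sum runs over all digit vectors t = (t₁,…,t_n) ∈ {0,…,b−1}ⁿ. Then z_n = (1/4)b^{2n+1} + (n/12)b^{n+2} − (1/2)b^{n+1} − (n/12)bⁿ + (1/4)b. -/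
/-!
Summing over the digit vectors first, `∑_t t_i t_j = bⁿ (μ² + [i = j] σ²)`, where `μ = (b - 1)/2`
and `σ² = (b² - 1)/12` are the mean and variance of a uniformly random digit. The `μ²` part
factors as `μ² (∑_i bⁱ)(∑_j b⁻ʲ) = μ² b¹⁻ⁿ ((bⁿ - 1)/(b - 1))²`, and the diagonal adds `n σ² bⁿ`.
-/

open Finset

section PiSum

variable {ι α R : Type*} [Fintype ι] [DecidableEq ι] [Fintype α] [CommSemiring R]

theorem Fintype.sum_pi_apply (f : α → R) (i : ι) :
    ∑ t : ι → α, f (t i) = Fintype.card α ^ (Fintype.card ι - 1) • ∑ a, f a := by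
  simpa using Fintype.sum_piFinset_apply f univ i

theorem Fintype.sum_pi_apply_mul_apply_of_ne (f : α → R) {i j : ι} (hij : i ≠ j) :
    ∑ t : ι → α, f (t i) * f (t j) = Fintype.card α ^ (Fintype.card ι - 2) • (∑ a, f a) ^ 2 := by
  rw [← (Equiv.funSplitAt i α).symm.sum_comp, Fintype.sum_prod_type]
  simp only [Equiv.funSplitAt_symm_apply, dif_pos, dif_neg hij.symm]
  simp_rw [← mul_sum, sum_pi_apply (ι := {k // k ≠ i}) f ⟨j, hij.symm⟩, ← sum_mul]
  rw [Fintype.card_subtype_compl, Fintype.card_subtype_eq, Nat.sub_sub, mul_smul_comm, sq]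

end PiSum

theorem pow_mul_sum_sum_zpow_sub {K : Type*} [Field K] (x : K) (n : ℕ) :
    x ^ n * ∑ i : Fin n, ∑ j : Fin n, x ^ (((i : ℕ) : ℤ) - ((j : ℕ) : ℤ)) =
      x * (∑ i ∈ range n, x ^ i) ^ 2 := by
  rcases eq_or_ne x 0 with rfl | hx
  · cases n <;> simp
  have key (i j : Fin n) :
      x ^ n * x ^ (((i : ℕ) : ℤ) - ((j : ℕ) : ℤ)) = x * (x ^ (i : ℕ) * x ^ (n - 1 - j)) := by
    rw [← zpow_natCast, ← zpow_add₀ hx, ← pow_add, ← pow_succ', ← zpow_natCast]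
    congr 1
    omega
  have reflect : ∑ j : Fin n, x ^ (n - 1 - j) = ∑ j ∈ range n, x ^ j := by
    rw [Fin.sum_univ_eq_sum_range (fun j => x ^ (n - 1 - j)), sum_range_reflect (fun j => x ^ j)]
  simp_rw [mul_sum, key, ← mul_sum, ← sum_mul, reflect,
    Fin.sum_univ_eq_sum_range (fun i => x ^ i), sq]

theorem sum_fin_val (b : ℕ) : ∑ a : Fin b, ((a : ℕ) : ℝ) = b * (b - 1) / 2 := by
  rw [Fin.sum_univ_eq_sum_range (fun a => (a : ℝ))]
  induction b with
  | zero => simp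
  | succ k ih => rw [sum_range_succ, ih]; push_cast; ring

theorem sum_fin_val_sq (b : ℕ) :
    ∑ a : Fin b, ((a : ℕ) : ℝ) ^ 2 = b * (b - 1) * (2 * b - 1) / 6 := by
  rw [Fin.sum_univ_eq_sum_range (fun a => (a : ℝ) ^ 2)]
  induction b with
  | zero => simp
  | succ k ih => rw [sum_range_succ, ih]; push_cast; ring

theorem sum_digit_mul_digit (b n : ℕ) (i j : Fin n) :
    ∑ t : Fin n → Fin b, ((t i : ℕ) : ℝ) * ((t j : ℕ) : ℝ) =
      b ^ n * (((b : ℝ) - 1) ^ 2 / 4 + if i = j then ((b : ℝ) ^ 2 - 1) / 12 else 0) := by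
  rcases eq_or_ne i j with rfl | hij
  · simp_rw [← sq]
    rw [Fintype.sum_pi_apply (fun a : Fin b => ((a : ℕ) : ℝ) ^ 2), sum_fin_val_sq, if_true,
      Fintype.card_fin, Fintype.card_fin, nsmul_eq_mul, ← pow_sub_one_mul i.pos.ne' (b : ℝ)]
    push_cast
    ring
  · have hn : 2 ≤ n := by
      have := i.isLt; have := j.isLt; have := Fin.val_ne_of_ne hij; omega
    rw [Fintype.sum_pi_apply_mul_apply_of_ne (fun a : Fin b => ((a : ℕ) : ℝ)) hij, sum_fin_val,
      if_neg hij, Fintype.card_fin, Fintype.card_fin, nsmul_eq_mul, ← pow_sub_mul_pow (b : ℝ) hn]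
    push_cast
    ring

theorem digit_double_sum_general (b n : ℕ) :
    (∑ t : Fin n → Fin b, ∑ i : Fin n, ∑ j : Fin n,
        (b:ℝ) ^ (((i:ℕ):ℤ) - ((j:ℕ):ℤ)) * ((t i : ℕ) : ℝ) * ((t j : ℕ) : ℝ))
      = (1/4) * (b:ℝ) ^ (2*n + 1) + ((n:ℝ)/12) * (b:ℝ) ^ (n + 2)
        - (1/2) * (b:ℝ) ^ (n + 1) - ((n:ℝ)/12) * (b:ℝ) ^ n + (1/4) * (b:ℝ) := by
  calc _ = ∑ i : Fin n, ∑ j : Fin n, (b : ℝ) ^ (((i : ℕ) : ℤ) - ((j : ℕ) : ℤ)) *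
          ∑ t : Fin n → Fin b, ((t i : ℕ) : ℝ) * ((t j : ℕ) : ℝ) := by
        simp only [mul_sum, mul_assoc]
        rw [sum_comm]
        exact sum_congr rfl fun i _ => sum_comm
    _ = (b - 1) ^ 2 / 4 * ((b : ℝ) ^ n * ∑ i : Fin n, ∑ j : Fin n,
          (b : ℝ) ^ (((i : ℕ) : ℤ) - ((j : ℕ) : ℤ))) + n * b ^ n * (b ^ 2 - 1) / 12 := by
        simp only [sum_digit_mul_digit, mul_add, mul_ite, mul_zero, sum_add_distrib, sum_ite_eq,
          mem_univ, if_true, sub_self, zpow_zero, sum_const, card_univ, Fintype.card_fin,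
          nsmul_eq_mul]
        simp_rw [← sum_mul]
        ring
    _ = b / 4 * ((∑ i ∈ range n, (b : ℝ) ^ i) * (b - 1)) ^ 2 + n * b ^ n * (b ^ 2 - 1) / 12 := by
        rw [pow_mul_sum_sum_zpow_sub]
        ring
    _ = _ := by
        rw [geom_sum_mul]
        ring

/-- Lemma 4.6: `z_n := ∑_{t ∈ {0,…,b−1}ⁿ} ∑_{i,j=1}^n b^{i−j} t_i t_j` equals
`(1/4)b^{2n+1} + (n/12)b^{n+2} − (1/2)b^{n+1} − (n/12)bⁿ + (1/4)b`. -/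
theorem digit_double_sum (b n : ℕ) (hb : 2 ≤ b) (hn : 1 ≤ n) :
    (∑ t : Fin n → Fin b, ∑ i : Fin n, ∑ j : Fin n,
        (b:ℝ) ^ (((i:ℕ):ℤ) - ((j:ℕ):ℤ)) * ((t i : ℕ) : ℝ) * ((t j : ℕ) : ℝ))
      = (1/4) * (b:ℝ) ^ (2*n + 1) + ((n:ℝ)/12) * (b:ℝ) ^ (n + 2)
        - (1/2) * (b:ℝ) ^ (n + 1) - ((n:ℝ)/12) * (b:ℝ) ^ n + (1/4) * (b:ℝ) :=
  digit_double_sum_general b n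
end

section
/- Let b ≥ 2 and n ≥ 1 be integers and let s₁,…,sₙ define a generalized Hammersley point set R_n with points z(t) = (z₁(t), z₂(t)). Then ∑_{t ∈ {0,…,b−1}ⁿ} (1 − z₁(t))(1 − z₂(t)) = 1 + b^{−n−1} · ∑_{t ∈ {0,…,b−1}ⁿ} ∑_{i=1}^{n} ∑_{j=1}^{n} b^{i−j} t_i s_j(t_j). -/
/-!
Expanding the product, the identity reduces to `∑ₜ z₁(t) = ∑ₜ z₂(t) = (bⁿ - 1) / 2`. Over all
`t`, each position takes every digit value exactly `bⁿ⁻¹` times, and the digit maps `sᵢ` only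
permute `{0, …, b - 1}`; so both sums equal `bⁿ⁻¹ · b(b - 1)/2 · ∑ₘ b⁻ᵐ⁻¹` over `m < n`.
-/

open Finset

/-- First coordinate of the generalized Hammersley point: `z₁ = tₙ/b + ⋯ + t₁/bⁿ`. -/
noncomputable def z1 (b n : ℕ) (t : Fin n → Fin b) : ℝ :=
  ∑ i : Fin n, ((t i : ℕ) : ℝ) / (b:ℝ) ^ (n - (i:ℕ))

/-- Second coordinate: `z₂ = s₁(t₁)/b + s₂(t₂)/b² + ⋯ + sₙ(tₙ)/bⁿ`. -/
noncomputable def z2 (b n : ℕ) (s : Fin n → ℕ → ℕ) (t : Fin n → Fin b) : ℝ :=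
  ∑ i : Fin n, ((s i (t i : ℕ) : ℕ) : ℝ) / (b:ℝ) ^ ((i:ℕ) + 1)

/-- Each `s i` is either the identity or the reflection `t ↦ b−1−t` on digits. -/
def IsDigitMaps (b n : ℕ) (s : Fin n → ℕ → ℕ) : Prop :=
  ∀ i, (∀ k, k < b → s i k = k) ∨ (∀ k, k < b → s i k = b - 1 - k)

lemma Fintype.sum_pi_apply_s10 {ι κ α : Type*} [DecidableEq ι] [Fintype ι] [Fintype κ]
    [AddCommMonoid α] (f : κ → α) (i : ι) :
    ∑ g : ι → κ, f (g i) = Fintype.card κ ^ (Fintype.card ι - 1) • ∑ k, f k := by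
  simpa using Fintype.sum_piFinset_apply f univ i

lemma Fin.sum_val_mul_two (b : ℕ) : (∑ k : Fin b, (k : ℝ)) * 2 = b * (b - 1) := by
  rw [Fin.sum_univ_eq_sum_range (fun k => (k : ℝ))]
  induction b with
  | zero => simp
  | succ b ih =>
    rw [sum_range_succ]
    push_cast
    linear_combination ih

lemma IsDigitMaps.sum_apply {b n : ℕ} {s : Fin n → ℕ → ℕ} (hs : IsDigitMaps b n s) (i : Fin n) :
    ∑ k : Fin b, (s i k : ℝ) = ∑ k : Fin b, (k : ℝ) := by
  simp only [Fin.sum_univ_eq_sum_range (fun k => (s i k : ℝ)),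
    Fin.sum_univ_eq_sum_range (fun k => (k : ℝ))]
  rcases hs i with hid | hrefl
  · exact sum_congr rfl fun k hk => by rw [hid k (mem_range.mp hk)]
  · rw [← sum_range_reflect (fun k => (k : ℝ))]
    exact sum_congr rfl fun k hk => by rw [hrefl k (mem_range.mp hk)]

theorem sum_sum_div_pow_perm {b n : ℕ} (hb : 0 < b) (d : Fin n → Fin b → ℝ)
    (hd : ∀ i, ∑ k, d i k = ∑ k : Fin b, (k : ℝ)) (e : Equiv.Perm (Fin n)) :
    ∑ t : Fin n → Fin b, ∑ i, d i (t i) / (b : ℝ) ^ ((e i : ℕ) + 1) = ((b : ℝ) ^ n - 1) / 2 := by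
  have hb0 : (b : ℝ) ≠ 0 := by positivity
  have position (i : Fin n) : ∑ t : Fin n → Fin b, d i (t i) / (b : ℝ) ^ ((e i : ℕ) + 1)
      = ((b : ℝ) - 1) / 2 * (b : ℝ) ^ (n - 1 - e i) := by
    have hpow : (b : ℝ) ^ (n - 1) * b = (b : ℝ) ^ (n - 1 - e i) * (b : ℝ) ^ ((e i : ℕ) + 1) := by
      rw [← pow_succ, ← pow_add]
      congr 1
      omega
    rw [Fintype.sum_pi_apply_s10 (fun k => d i k / (b : ℝ) ^ ((e i : ℕ) + 1)), ← sum_div, hd,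
      nsmul_eq_mul, Fintype.card_fin, Fintype.card_fin, Nat.cast_pow]
    field_simp
    linear_combination (b : ℝ) ^ (n - 1) * Fin.sum_val_mul_two b + (b - 1 : ℝ) * hpow
  rw [sum_comm, sum_congr rfl fun i _ => position i, ← mul_sum,
    Equiv.sum_comp e (fun m => (b : ℝ) ^ (n - 1 - m)),
    Fin.sum_univ_eq_sum_range (fun m => (b : ℝ) ^ (n - 1 - m)),
    sum_range_reflect (fun m => (b : ℝ) ^ m), ← geom_sum_mul]
  ring

lemma sum_z1 {b : ℕ} (hb : 0 < b) (n : ℕ) :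
    ∑ t : Fin n → Fin b, z1 b n t = ((b : ℝ) ^ n - 1) / 2 := by
  have hrev (i : Fin n) : n - (i : ℕ) = (Fin.revPerm i : ℕ) + 1 := by
    rw [Fin.revPerm_apply, Fin.val_rev]
    omega
  simp only [z1, hrev]
  exact sum_sum_div_pow_perm hb (fun _ k => (k : ℝ)) (fun _ => rfl) Fin.revPerm

lemma sum_z2 {b n : ℕ} (hb : 0 < b) {s : Fin n → ℕ → ℕ} (hs : IsDigitMaps b n s) :
    ∑ t : Fin n → Fin b, z2 b n s t = ((b : ℝ) ^ n - 1) / 2 :=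
  sum_sum_div_pow_perm hb (fun i k => (s i k : ℝ)) hs.sum_apply (Equiv.refl _)

lemma z1_mul_z2 {b : ℕ} (hb : 0 < b) (n : ℕ) (s : Fin n → ℕ → ℕ) (t : Fin n → Fin b) :
    z1 b n t * z2 b n s t
      = (b : ℝ) ^ (-(n : ℤ) - 1) * ∑ i : Fin n, ∑ j : Fin n,
          (b : ℝ) ^ ((i : ℕ) - (j : ℕ) : ℤ) * ((t i : ℕ) : ℝ) * ((s j (t j : ℕ) : ℕ) : ℝ) := by
  have hb0 : (b : ℝ) ≠ 0 := by positivity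
  have weight (i j : Fin n) : (b : ℝ) ^ (-(n : ℤ) - 1) * (b : ℝ) ^ ((i : ℕ) - (j : ℕ) : ℤ)
      = ((b : ℝ) ^ (n - (i : ℕ)))⁻¹ * ((b : ℝ) ^ ((j : ℕ) + 1))⁻¹ := by
    rw [← zpow_natCast, ← zpow_natCast, ← zpow_neg, ← zpow_neg, ← zpow_add₀ hb0,
      ← zpow_add₀ hb0]
    congr 1
    have := i.isLt
    push_cast
    omega
  rw [z1, z2, sum_mul_sum, mul_sum]
  refine sum_congr rfl fun i _ => ?_
  rw [mul_sum]
  refine sum_congr rfl fun j _ => ?_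
  linear_combination (-((t i : ℕ) : ℝ) * ((s j (t j : ℕ) : ℕ) : ℝ)) * weight i j

theorem sum_corner_products_general (b n : ℕ) (hb : 2 ≤ b)
    (s : Fin n → ℕ → ℕ) (hs : IsDigitMaps b n s) :
    (∑ t : Fin n → Fin b, (1 - z1 b n t) * (1 - z2 b n s t))
      = 1 + (b:ℝ) ^ (-(n:ℤ) - 1) *
          ∑ t : Fin n → Fin b, ∑ i : Fin n, ∑ j : Fin n,
            (b:ℝ) ^ (((i:ℕ):ℤ) - ((j:ℕ):ℤ)) * ((t i : ℕ) : ℝ) * ((s j (t j : ℕ) : ℕ) : ℝ) := by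
  have hb0 : 0 < b := by omega
  have expand (t : Fin n → Fin b) : (1 - z1 b n t) * (1 - z2 b n s t)
      = 1 - z1 b n t - z2 b n s t + z1 b n t * z2 b n s t := by ring
  simp only [expand, sum_add_distrib, sum_sub_distrib, sum_z1 hb0, sum_z2 hb0 hs,
    z1_mul_z2 hb0, ← mul_sum, sum_const, card_univ, Fintype.card_pi, Fintype.card_fin,
    prod_const, nsmul_eq_mul, mul_one]
  push_cast
  ring

/-- Lemma 4.7: `∑_t (1 − z₁(t))(1 − z₂(t)) = 1 + b^{−n−1}·∑_t ∑_{i,j=1}^n b^{i−j} t_i s_j(t_j)`. -/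
theorem sum_corner_products (b n : ℕ) (hb : 2 ≤ b) (hn : 1 ≤ n)
    (s : Fin n → ℕ → ℕ) (hs : IsDigitMaps b n s) :
    (∑ t : Fin n → Fin b, (1 - z1 b n t) * (1 - z2 b n s t))
      = 1 + (b:ℝ) ^ (-(n:ℤ) - 1) *
          ∑ t : Fin n → Fin b, ∑ i : Fin n, ∑ j : Fin n,
            (b:ℝ) ^ (((i:ℕ):ℤ) - ((j:ℕ):ℤ)) * ((t i : ℕ) : ℝ) * ((s j (t j : ℕ) : ℕ) : ℝ) :=
  sum_corner_products_general b n hb s hs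
end

section
/- Let b ≥ 2 and n ≥ 1 be integers and let s₁,…,sₙ : {0,…,b−1} → {0,…,b−1} be maps, each being either the identity or the reflection t ↦ b−1−t, and let a = #{i ∈ {1,…,n} : s_i is the identity}. Then ∑_{t ∈ {0,…,b−1}ⁿ} ∑_{i=1}^{n} ∑_{j=1}^{n} b^{i−j} t_i s_j(t_j) = (1/4)b^{2n+1} − (1/2)b^{n+1} + (1/4)b + (2a − n)·((b² − 1)/12)·bⁿ. -/
open scoped Classical
open Finset

private lemma hsumId (b : ℕ) : ∑ u ∈ Finset.range b, (u:ℝ) = b*(b-1)/2 := by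
  induction b with
  | zero => simp
  | succ m ih => rw [Finset.sum_range_succ, ih]; push_cast; ring

private lemma hsumSq (b : ℕ) : ∑ u ∈ Finset.range b, (u:ℝ)*(u:ℝ) = b*(b-1)*(2*b-1)/6 := by
  induction b with
  | zero => simp
  | succ m ih => rw [Finset.sum_range_succ, ih]; push_cast; ring

private lemma hpi_prod {n b : ℕ} (f g : Fin b → ℝ) (i j : Fin n) :
    ∑ t : Fin n → Fin b, f (t i) * g (t j)
      = ∏ k : Fin n, ∑ u : Fin b, (if k = i then f u else 1) * (if k = j then g u else 1) := by
  rw [Finset.prod_univ_sum, Fintype.piFinset_univ]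
  refine Finset.sum_congr rfl fun t _ => ?_
  rw [Finset.prod_mul_distrib]
  simp

private lemma hpi_diag {n b : ℕ} (f g : Fin b → ℝ) (i : Fin n) :
    ∑ t : Fin n → Fin b, f (t i) * g (t i)
      = (b:ℝ)^(n-1) * ∑ u : Fin b, f u * g u := by
  rw [hpi_prod]
  rw [← Finset.mul_prod_erase Finset.univ _ (Finset.mem_univ i)]
  have h1 : ∏ k ∈ Finset.univ.erase i, ∑ u : Fin b,
      (if k = i then f u else 1) * (if k = i then g u else 1) = (b:ℝ)^(n-1) := by
    have hterm : ∀ k ∈ Finset.univ.erase i, (∑ u : Fin b,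
        (if k = i then f u else 1) * (if k = i then g u else 1)) = (b:ℝ) := by
      intro k hk
      simp [Finset.mem_erase.mp hk |>.1]
    rw [Finset.prod_congr rfl hterm, Finset.prod_const,
      Finset.card_erase_of_mem (Finset.mem_univ i), Finset.card_univ, Fintype.card_fin]
  rw [h1]
  simp [mul_comm]

private lemma hpi_off {n b : ℕ} (f g : Fin b → ℝ) (i j : Fin n) (hij : i ≠ j) :
    ∑ t : Fin n → Fin b, f (t i) * g (t j)
      = (b:ℝ)^(n-2) * (∑ u : Fin b, f u) * (∑ u : Fin b, g u) := by
  rw [hpi_prod]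
  rw [← Finset.mul_prod_erase Finset.univ _ (Finset.mem_univ i)]
  have hj : j ∈ Finset.univ.erase i := by simp [Ne.symm hij]
  rw [← Finset.mul_prod_erase _ _ hj]
  have h1 : ∏ k ∈ (Finset.univ.erase i).erase j, ∑ u : Fin b,
      (if k = i then f u else 1) * (if k = j then g u else 1) = (b:ℝ)^(n-2) := by
    have hterm : ∀ k ∈ (Finset.univ.erase i).erase j, (∑ u : Fin b,
        (if k = i then f u else 1) * (if k = j then g u else 1)) = (b:ℝ) := by
      intro k hk
      obtain ⟨hkj, hk2⟩ := Finset.mem_erase.mp hk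
      obtain ⟨hki, -⟩ := Finset.mem_erase.mp hk2
      simp [hki, hkj]
    rw [Finset.prod_congr rfl hterm, Finset.prod_const,
      Finset.card_erase_of_mem hj, Finset.card_erase_of_mem (Finset.mem_univ i),
      Finset.card_univ, Fintype.card_fin]
    congr 1
    all_goals omega
  rw [h1]
  simp only [if_pos rfl, if_true, eq_self_iff_true, if_neg hij, if_neg (Ne.symm hij), mul_one, one_mul]
  ring

/-- The number `a` of indices `i` for which `s i` is the identity on digits. -/
noncomputable def aCount (b n : ℕ) (s : Fin n → ℕ → ℕ) : ℕ :=
  (Finset.univ.filter (fun i : Fin n => ∀ k, k < b → s i k = k)).card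

/-- Lemma 4.8: `∑_t ∑_{i,j=1}^n b^{i−j} t_i s_j(t_j)
= (1/4)b^{2n+1} − (1/2)b^{n+1} + (1/4)b + (2a − n)·((b²−1)/12)·bⁿ`. -/
theorem digit_double_sum_hammersley (b n : ℕ) (hb : 2 ≤ b) (hn : 1 ≤ n)
    (s : Fin n → ℕ → ℕ) (hs : IsDigitMaps b n s) :
    (∑ t : Fin n → Fin b, ∑ i : Fin n, ∑ j : Fin n,
        (b:ℝ) ^ (((i:ℕ):ℤ) - ((j:ℕ):ℤ)) * ((t i : ℕ) : ℝ) * ((s j (t j : ℕ) : ℕ) : ℝ))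
      = (1/4) * (b:ℝ) ^ (2*n + 1) - (1/2) * (b:ℝ) ^ (n + 1) + (1/4) * (b:ℝ)
        + (2 * (aCount b n s : ℝ) - (n:ℝ)) * (((b:ℝ)^2 - 1) / 12) * (b:ℝ) ^ n := by
  have hb0 : (b:ℝ) ≠ 0 := Nat.cast_ne_zero.mpr (by omega)
  have hb2 : (2:ℝ) ≤ (b:ℝ) := by exact_mod_cast hb
  have hb1 : (b:ℝ) - 1 ≠ 0 := by nlinarith
  have hX0 : (b:ℝ)^n ≠ 0 := pow_ne_zero n hb0
  set μ : ℝ := ∑ u : Fin b, ((u:ℕ):ℝ) with hμdef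
  set c : Fin n → ℝ := fun j => ∑ u : Fin b, ((u:ℕ):ℝ) * ((s j (u:ℕ) : ℕ):ℝ) with hcdef
  have hμval : μ = (b:ℝ)*((b:ℝ)-1)/2 := by
    rw [hμdef, Fin.sum_univ_eq_sum_range (fun k => ((k:ℕ):ℝ))]
    exact hsumId b
  -- sums of g j are always μ
  have hgsum : ∀ j : Fin n, ∑ u : Fin b, ((s j (u:ℕ) : ℕ):ℝ) = μ := by
    intro j
    rcases hs j with h | h
    · rw [hμdef]
      exact Finset.sum_congr rfl fun u _ => by rw [h u u.isLt]
    · rw [hμdef, Fin.sum_univ_eq_sum_range (fun k => ((s j k : ℕ):ℝ)),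
        Fin.sum_univ_eq_sum_range (fun k => ((k:ℕ):ℝ))]
      rw [Finset.sum_congr rfl (fun k hk => by rw [h k (Finset.mem_range.mp hk)])]
      exact Finset.sum_range_reflect (fun k => ((k:ℕ):ℝ)) b
  -- value of c
  have hcval : ∀ i : Fin n, c i = if (∀ k, k < b → s i k = k)
      then (b:ℝ)*((b:ℝ)-1)*(2*(b:ℝ)-1)/6 else (b:ℝ)*((b:ℝ)-1)*((b:ℝ)-2)/6 := by
    intro i
    by_cases hP : ∀ k, k < b → s i k = k
    · rw [if_pos hP, hcdef]
      simp only
      rw [Fin.sum_univ_eq_sum_range (fun k => ((k:ℕ):ℝ) * ((s i k : ℕ):ℝ))]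
      rw [Finset.sum_congr rfl (fun k hk => by rw [hP k (Finset.mem_range.mp hk)])]
      exact hsumSq b
    · have hR : ∀ k, k < b → s i k = b - 1 - k := (hs i).resolve_left hP
      rw [if_neg hP, hcdef]
      simp only
      rw [Fin.sum_univ_eq_sum_range (fun k => ((k:ℕ):ℝ) * ((s i k : ℕ):ℝ))]
      have hstep : ∀ k ∈ Finset.range b, ((k:ℕ):ℝ) * ((s i k : ℕ):ℝ)
          = ((b:ℝ)-1) * (k:ℝ) - (k:ℝ)*(k:ℝ) := by
        intro k hk
        have hkb := Finset.mem_range.mp hk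
        rw [hR k hkb]
        rw [Nat.cast_sub (by omega), Nat.cast_sub (by omega)]
        push_cast
        ring
      rw [Finset.sum_congr rfl hstep, Finset.sum_sub_distrib, ← Finset.mul_sum, hsumId, hsumSq]
      ring
  -- rearrange the main sum
  rw [Finset.sum_comm]
  have h1 : ∀ i : Fin n, (∑ t : Fin n → Fin b, ∑ j : Fin n,
      (b:ℝ) ^ (((i:ℕ):ℤ) - ((j:ℕ):ℤ)) * ((t i : ℕ) : ℝ) * ((s j (t j : ℕ) : ℕ) : ℝ))
      = ∑ j : Fin n, (b:ℝ) ^ (((i:ℕ):ℤ) - ((j:ℕ):ℤ)) *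
          ∑ t : Fin n → Fin b, ((t i : ℕ) : ℝ) * ((s j (t j : ℕ) : ℕ) : ℝ) := by
    intro i
    rw [Finset.sum_comm]
    refine Finset.sum_congr rfl fun j _ => ?_
    rw [Finset.mul_sum]
    exact Finset.sum_congr rfl fun t _ => mul_assoc _ _ _
  simp only [h1]
  -- evaluate each (i,j) term
  have hpow1 : (b:ℝ)^(n-1) = (b:ℝ)^n / (b:ℝ) := by
    rw [eq_div_iff hb0, ← pow_succ]
    congr 1
    omega
  have hterm : ∀ i j : Fin n, (b:ℝ) ^ (((i:ℕ):ℤ) - ((j:ℕ):ℤ)) *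
      (∑ t : Fin n → Fin b, ((t i : ℕ) : ℝ) * ((s j (t j : ℕ) : ℕ) : ℝ))
      = (b:ℝ)^(((i:ℕ):ℤ)) * (b:ℝ)^(-((j:ℕ):ℤ)) * ((b:ℝ)^n/(b:ℝ)^2) * μ^2
        + (if j = i then ((b:ℝ)^n/(b:ℝ)) * c i - ((b:ℝ)^n/(b:ℝ)^2) * μ^2 else 0) := by
    intro i j
    by_cases hij : i = j
    · subst hij
      have hd : (∑ t : Fin n → Fin b, ((t i : ℕ) : ℝ) * ((s i ((t i : ℕ)) : ℕ):ℝ))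
          = (b:ℝ)^(n-1) * ∑ u : Fin b, ((u:ℕ):ℝ) * ((s i ((u:ℕ)) : ℕ):ℝ) :=
        hpi_diag (fun u => ((u:ℕ):ℝ)) (fun u => ((s i ((u:ℕ)) : ℕ):ℝ)) i
      rw [hd, hpow1, if_pos rfl, sub_self, zpow_zero, one_mul]
      have hz : (b:ℝ)^(((i:ℕ):ℤ)) * (b:ℝ)^(-((i:ℕ):ℤ)) = 1 := by
        rw [← zpow_add₀ hb0]
        simp
      rw [hz]
      have : (∑ u : Fin b, ((u:ℕ):ℝ) * ((s i ((u:ℕ)) : ℕ):ℝ)) = c i := rfl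
      rw [this]
      ring
    · have hd : (∑ t : Fin n → Fin b, ((t i : ℕ) : ℝ) * ((s j ((t j : ℕ)) : ℕ):ℝ))
          = (b:ℝ)^(n-2) * (∑ u : Fin b, ((u:ℕ):ℝ)) * (∑ u : Fin b, ((s j ((u:ℕ)) : ℕ):ℝ)) :=
        hpi_off (fun u => ((u:ℕ):ℝ)) (fun u => ((s j ((u:ℕ)) : ℕ):ℝ)) i j hij
      have hn2 : 2 ≤ n := by
        rcases i with ⟨iv, hi⟩; rcases j with ⟨jv, hj⟩
        simp only [Fin.ext_iff] at hij
        omega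
      have hpow2 : (b:ℝ)^(n-2) = (b:ℝ)^n / (b:ℝ)^2 := by
        rw [eq_div_iff (pow_ne_zero 2 hb0), ← pow_add]
        congr 1
        omega
      rw [hd, hgsum j, hpow2, if_neg (Ne.symm hij), add_zero,
        zpow_sub₀ hb0, zpow_neg]
      rw [hμdef]
      ring
  simp only [hterm]
  -- split the double sum
  have h2 : ∀ i : Fin n, (∑ j : Fin n,
      ((b:ℝ)^(((i:ℕ):ℤ)) * (b:ℝ)^(-((j:ℕ):ℤ)) * ((b:ℝ)^n/(b:ℝ)^2) * μ^2
        + (if j = i then ((b:ℝ)^n/(b:ℝ)) * c i - ((b:ℝ)^n/(b:ℝ)^2) * μ^2 else 0)))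
      = (b:ℝ)^(((i:ℕ):ℤ)) * (∑ j : Fin n, (b:ℝ)^(-((j:ℕ):ℤ))) * ((b:ℝ)^n/(b:ℝ)^2) * μ^2
        + (((b:ℝ)^n/(b:ℝ)) * c i - ((b:ℝ)^n/(b:ℝ)^2) * μ^2) := by
    intro i
    rw [Finset.sum_add_distrib, Finset.sum_ite_eq' Finset.univ i
      (fun _ => ((b:ℝ)^n/(b:ℝ)) * c i - ((b:ℝ)^n/(b:ℝ)^2) * μ^2), if_pos (Finset.mem_univ i)]
    congr 1
    rw [Finset.mul_sum, Finset.sum_mul, Finset.sum_mul]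
  simp only [h2]
  rw [Finset.sum_add_distrib]
  -- geometric sums
  set G : ℝ := ∑ i ∈ Finset.range n, (b:ℝ)^i with hGdef
  have hT : ∑ i : Fin n, ((b:ℝ)^(((i:ℕ):ℤ)) * (∑ j : Fin n, (b:ℝ)^(-((j:ℕ):ℤ))) * ((b:ℝ)^n/(b:ℝ)^2) * μ^2)
      = (∑ i : Fin n, (b:ℝ)^(((i:ℕ):ℤ))) * (∑ j : Fin n, (b:ℝ)^(-((j:ℕ):ℤ))) * ((b:ℝ)^n/(b:ℝ)^2) * μ^2 := by
    simp only [Finset.sum_mul]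
  rw [hT]
  have hTv : (∑ i : Fin n, (b:ℝ)^(((i:ℕ):ℤ))) = G := by
    rw [hGdef, Fin.sum_univ_eq_sum_range (fun i => (b:ℝ)^((i:ℤ)))]
    exact Finset.sum_congr rfl fun i _ => by rw [zpow_natCast]
  have hSv : (∑ j : Fin n, (b:ℝ)^(-((j:ℕ):ℤ))) = G * (b:ℝ) / (b:ℝ)^n := by
    rw [eq_div_iff hX0]
    have hstep : ∀ j : Fin n, (b:ℝ)^(-((j:ℕ):ℤ)) * (b:ℝ)^(n-1) = (b:ℝ)^((n-1-(j:ℕ))) := by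
      intro j
      rw [← zpow_natCast (b:ℝ) (n-1), ← zpow_add₀ hb0, ← zpow_natCast (b:ℝ) (n-1-(j:ℕ))]
      congr 1
      have := j.isLt
      omega
    have h3 : (∑ j : Fin n, (b:ℝ)^(-((j:ℕ):ℤ))) * (b:ℝ)^(n-1) = G := by
      rw [Finset.sum_mul]
      rw [Finset.sum_congr rfl (fun j _ => hstep j),
        Fin.sum_univ_eq_sum_range (fun j => (b:ℝ)^(n-1-j))]
      rw [hGdef]
      exact Finset.sum_range_reflect (fun i => (b:ℝ)^i) n
    calc (∑ j : Fin n, (b:ℝ)^(-((j:ℕ):ℤ))) * (b:ℝ)^n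
        = ((∑ j : Fin n, (b:ℝ)^(-((j:ℕ):ℤ))) * (b:ℝ)^(n-1)) * (b:ℝ) := by
          rw [mul_assoc, ← pow_succ]
          congr 2
          omega
      _ = G * (b:ℝ) := by rw [h3]
  rw [hTv, hSv]
  -- part B
  have hB : (∑ i : Fin n, (((b:ℝ)^n/(b:ℝ)) * c i - ((b:ℝ)^n/(b:ℝ)^2) * μ^2))
      = (aCount b n s : ℝ) * (((b:ℝ)^n/(b:ℝ)) * ((b:ℝ)*((b:ℝ)-1)*(2*(b:ℝ)-1)/6) - ((b:ℝ)^n/(b:ℝ)^2) * μ^2)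
        + ((n:ℝ) - (aCount b n s : ℝ)) * (((b:ℝ)^n/(b:ℝ)) * ((b:ℝ)*((b:ℝ)-1)*((b:ℝ)-2)/6) - ((b:ℝ)^n/(b:ℝ)^2) * μ^2) := by
    have hsplit : ∀ i : Fin n, (((b:ℝ)^n/(b:ℝ)) * c i - ((b:ℝ)^n/(b:ℝ)^2) * μ^2)
        = if (∀ k, k < b → s i k = k)
          then (((b:ℝ)^n/(b:ℝ)) * ((b:ℝ)*((b:ℝ)-1)*(2*(b:ℝ)-1)/6) - ((b:ℝ)^n/(b:ℝ)^2) * μ^2)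
          else (((b:ℝ)^n/(b:ℝ)) * ((b:ℝ)*((b:ℝ)-1)*((b:ℝ)-2)/6) - ((b:ℝ)^n/(b:ℝ)^2) * μ^2) := by
      intro i
      rw [hcval i]
      split_ifs <;> rfl
    rw [Finset.sum_congr rfl (fun i _ => hsplit i), Finset.sum_ite, Finset.sum_const, Finset.sum_const]
    have hcard1 : (Finset.univ.filter (fun i : Fin n => ∀ k, k < b → s i k = k)).card
        = aCount b n s := rfl
    have hcard2 : (Finset.univ.filter (fun i : Fin n => ¬ ∀ k, k < b → s i k = k)).card
        = n - aCount b n s := by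
      have := Finset.card_filter_add_card_filter_not
        (s := (Finset.univ : Finset (Fin n))) (p := fun i : Fin n => ∀ k, k < b → s i k = k)
      rw [Finset.card_univ, Fintype.card_fin] at this
      omega
    rw [hcard1, hcard2, nsmul_eq_mul, nsmul_eq_mul]
    have ha : aCount b n s ≤ n := by
      have := Finset.card_filter_le (Finset.univ : Finset (Fin n))
        (fun i : Fin n => ∀ k, k < b → s i k = k)
      rw [Finset.card_univ, Fintype.card_fin] at this
      exact this
    rw [Nat.cast_sub ha]
  rw [hB, hμval]
  -- final algebra
  have hGmul : G * ((b:ℝ) - 1) = (b:ℝ)^n - 1 := geom_sum_mul (b:ℝ) n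
  have hGval : G = ((b:ℝ)^n - 1) / ((b:ℝ) - 1) := by
    rw [eq_div_iff hb1]; exact hGmul
  rw [hGval]
  have hp1 : (b:ℝ)^(2*n+1) = (b:ℝ)^n * (b:ℝ)^n * (b:ℝ) := by
    rw [pow_succ, two_mul, pow_add]
  have hp2 : (b:ℝ)^(n+1) = (b:ℝ)^n * (b:ℝ) := by rw [pow_succ]
  rw [hp1, hp2]
  field_simp
  ring
end

section
/- Let b ≥ 2 and n ≥ 1 be integers and let R_n be a generalized Hammersley point set with parameter a_n, and let D be its discrepancy function. Then ∫_{[0,1)²} D(x₁,x₂) dx₁dx₂ = (1/4)b^{−2n} + (1/2)b^{−n} + (2a_n − n)·((b² − 1)/12)·b^{−n−1}. -/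
open scoped Classical
open Finset MeasureTheory

/-- The discrepancy function of the generalized Hammersley point set. -/
noncomputable def disc (b n : ℕ) (s : Fin n → ℕ → ℕ) (x₁ x₂ : ℝ) : ℝ :=
  (b:ℝ) ^ (-(n:ℤ)) *
      ∑ t : Fin n → Fin b,
        (if z1 b n t < x₁ then (1:ℝ) else 0) * (if z2 b n s t < x₂ then (1:ℝ) else 0)
    - x₁ * x₂

/-!
The average over the `bⁿ` points is an expectation over independent uniform digits `t₁, …, tₙ`.
Since `∫₀¹ 1[z < x] dx = 1 - z`, the integral becomes `𝔼[(1 - z₁)(1 - z₂)] - 1/4`. Both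
coordinates are weighted sums of the digits, so `𝔼 z₁ = 𝔼 z₂ = (1 - b⁻ⁿ)/2`, and by independence
only the diagonal terms contribute to `Cov(z₁, z₂)`: the digit `tᵢ` enters `z₁` and `z₂` with
weights whose product is `b^{-(n+1)}`, while `Cov(t, s(t)) = ±(b² - 1)/12` according as `s` is the
identity or the reflection.
-/

open scoped BigOperators

section Expect

variable {ι α K : Type*} [Fintype ι] [DecidableEq ι] [Fintype α] [Nonempty α]
  [Field K] [CharZero K]

lemma expect_pi_eval (i : ι) (f : α → K) : 𝔼 t : ι → α, f (t i) = 𝔼 a, f a := by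
  rw [Fintype.expect_equiv (Equiv.piSplitAt i fun _ => α) (fun t => f (t i)) (fun p => f p.1)
      fun _ => rfl, ← Finset.univ_product_univ, Finset.expect_product]
  simp only [Fintype.expect_const]

lemma expect_pi_eval_mul_eval {i j : ι} (hij : i ≠ j) (f g : α → K) :
    𝔼 t : ι → α, f (t i) * g (t j) = (𝔼 a, f a) * 𝔼 a, g a := by
  rw [Fintype.expect_equiv (Equiv.piSplitAt i fun _ => α) (fun t => f (t i) * g (t j))
      (fun p => f p.1 * g (p.2 ⟨j, hij.symm⟩)) fun _ => rfl,
    ← Finset.univ_product_univ, Finset.expect_product, Finset.expect_mul]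
  simp only [← Finset.mul_expect, expect_pi_eval]

lemma expect_pi_sum (f : ι → α → K) : 𝔼 t : ι → α, ∑ i, f i (t i) = ∑ i, 𝔼 a, f i a := by
  simp only [Finset.expect_sum_comm, expect_pi_eval]

lemma expect_pi_sum_mul_sum (f g : ι → α → K) :
    𝔼 t : ι → α, (∑ i, f i (t i)) * ∑ j, g j (t j)
      = (𝔼 t : ι → α, ∑ i, f i (t i)) * (𝔼 t : ι → α, ∑ j, g j (t j))
        + ∑ i, (𝔼 a, f i a * g i a - (𝔼 a, f i a) * 𝔼 a, g i a) := by
  have entry : ∀ i j, 𝔼 t : ι → α, f i (t i) * g j (t j)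
      = (𝔼 a, f i a) * (𝔼 a, g j a)
        + if i = j then 𝔼 a, f i a * g i a - (𝔼 a, f i a) * 𝔼 a, g i a else 0 := by
    intro i j
    rcases eq_or_ne i j with rfl | hij
    · simp only [expect_pi_eval (f := fun a => f i a * g i a), if_true]
      ring
    · simp only [expect_pi_eval_mul_eval hij, if_neg hij, add_zero]
  simp only [Finset.sum_mul_sum, Finset.expect_sum_comm, entry, expect_pi_eval,
    Finset.sum_add_distrib, Finset.sum_ite_eq, Finset.mem_univ, if_true]

end Expect

section Digits

variable {b : ℕ}

lemma sum_range_natCast (m : ℕ) : ∑ k ∈ range m, (k : ℝ) = m * (m - 1) / 2 := by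
  induction m with
  | zero => simp
  | succ m ih => rw [sum_range_succ, ih]; push_cast; ring

lemma sum_range_natCast_sq (m : ℕ) :
    ∑ k ∈ range m, (k : ℝ) ^ 2 = m * (m - 1) * (2 * m - 1) / 6 := by
  induction m with
  | zero => simp
  | succ m ih => rw [sum_range_succ, ih]; push_cast; ring

variable [NeZero b]

lemma expect_fin_val : 𝔼 a : Fin b, ((a : ℕ) : ℝ) = (b - 1) / 2 := by
  rw [Fintype.expect_eq_sum_div_card, Fin.sum_univ_eq_sum_range (fun k => (k : ℝ)),
    sum_range_natCast, Fintype.card_fin]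
  field_simp [NeZero.ne b]

lemma expect_fin_val_sq : 𝔼 a : Fin b, ((a : ℕ) : ℝ) ^ 2 = (b - 1) * (2 * b - 1) / 6 := by
  rw [Fintype.expect_eq_sum_div_card, Fin.sum_univ_eq_sum_range (fun k => (k : ℝ) ^ 2),
    sum_range_natCast_sq, Fintype.card_fin]
  field_simp [NeZero.ne b]

omit [NeZero b] in
lemma natCast_reflect (a : Fin b) : ((b - 1 - a : ℕ) : ℝ) = b - 1 - a := by
  have := a.isLt
  rw [Nat.cast_sub (by omega), Nat.cast_sub (by omega), Nat.cast_one]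

lemma expect_fin_reflect : 𝔼 a : Fin b, ((b - 1 - a : ℕ) : ℝ) = (b - 1) / 2 := by
  simp only [natCast_reflect, Finset.expect_sub_distrib, Fintype.expect_const, expect_fin_val]
  ring

lemma expect_fin_val_mul_reflect :
    𝔼 a : Fin b, ((a : ℕ) : ℝ) * ((b - 1 - a : ℕ) : ℝ) = (b - 1) * (b - 2) / 6 := by
  have : ∀ a : Fin b, ((a : ℕ) : ℝ) * ((b - 1 - a : ℕ) : ℝ) = (b - 1) * a - (a : ℝ) ^ 2 := by
    intro a; rw [natCast_reflect]; ring
  simp only [this, Finset.expect_sub_distrib, ← Finset.mul_expect, expect_fin_val,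
    expect_fin_val_sq]
  ring

end Digits

section Integral

lemma integrableOn_Ico_ite_lt (z : ℝ) :
    IntegrableOn (fun x => if z < x then (1 : ℝ) else 0) (Set.Ico 0 1) :=
  (integrableOn_const (by simp)).indicator measurableSet_Ioi

lemma integral_Ico_ite_lt {z : ℝ} (hz : z ∈ Set.Icc 0 1) :
    ∫ x in Set.Ico 0 1, (if z < x then (1 : ℝ) else 0) = 1 - z := by
  have hset : Set.Ico 0 1 ∩ Set.Ioi z = Set.Ioo z 1 := by
    ext x
    simp only [Set.mem_inter_iff, Set.mem_Ico, Set.mem_Ioi, Set.mem_Ioo]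
    constructor
    · rintro ⟨⟨-, hx1⟩, hzx⟩; exact ⟨hzx, hx1⟩
    · rintro ⟨hzx, hx1⟩; exact ⟨⟨hz.1.trans hzx.le, hx1⟩, hzx⟩
  change ∫ x in Set.Ico 0 1, (Set.Ioi z).indicator (fun _ => 1) x = 1 - z
  rw [setIntegral_indicator measurableSet_Ioi, hset, setIntegral_const,
    Real.volume_real_Ioo_of_le hz.2, smul_eq_mul, mul_one]

lemma integral_Ico_id : ∫ x in Set.Ico (0 : ℝ) 1, x = 1 / 2 := by
  rw [integral_Ico_eq_integral_Ioc, ← intervalIntegral.integral_of_le zero_le_one, integral_id]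
  norm_num

variable {T : Type*} [Fintype T]

lemma integral_Ico_expect_mul_ite_lt_sub (c q : T → ℝ) (hq : ∀ t, q t ∈ Set.Icc 0 1) (d : ℝ) :
    ∫ x in Set.Ico 0 1, (𝔼 t, c t * (if q t < x then (1 : ℝ) else 0) - d * x)
      = 𝔼 t, c t * (1 - q t) - d / 2 := by
  have hint : ∀ t, IntegrableOn (fun x => c t * if q t < x then (1 : ℝ) else 0) (Set.Ico 0 1) :=
    fun t => (integrableOn_Ico_ite_lt (q t)).const_mul _
  have hid : IntegrableOn (fun x : ℝ => x) (Set.Ico 0 1) :=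
    continuous_id.integrableOn_Icc.mono_set Set.Ico_subset_Icc_self
  simp only [Fintype.expect_eq_sum_div_card]
  rw [integral_sub ((integrable_finsetSum _ fun t _ => hint t).div_const _) (hid.const_mul d),
    integral_div, integral_finsetSum _ fun t _ => hint t, integral_const_mul, integral_Ico_id]
  simp only [integral_const_mul, integral_Ico_ite_lt (hq _)]
  ring

lemma integral_discrepancy (p q : T → ℝ) (hp : ∀ t, p t ∈ Set.Icc 0 1)
    (hq : ∀ t, q t ∈ Set.Icc 0 1) :
    ∫ x₁ in Set.Ico 0 1, ∫ x₂ in Set.Ico 0 1,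
        (𝔼 t, (if p t < x₁ then (1 : ℝ) else 0) * (if q t < x₂ then (1 : ℝ) else 0) - x₁ * x₂)
      = 𝔼 t, (1 - p t) * (1 - q t) - 1 / 4 := by
  have inner : ∀ x₁ : ℝ, ∫ x₂ in Set.Ico 0 1,
      (𝔼 t, (if p t < x₁ then (1 : ℝ) else 0) * (if q t < x₂ then (1 : ℝ) else 0) - x₁ * x₂)
        = 𝔼 t, (1 - q t) * (if p t < x₁ then (1 : ℝ) else 0) - 1 / 2 * x₁ := by
    intro x₁
    rw [integral_Ico_expect_mul_ite_lt_sub _ _ hq]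
    simp only [mul_comm]
    ring
  simp only [inner]
  rw [integral_Ico_expect_mul_ite_lt_sub _ _ hp]
  simp only [mul_comm (1 - q _)]
  norm_num

end Integral

lemma natCast_mem_Icc_of_lt {k b : ℕ} (h : k < b) : (k : ℝ) ∈ Set.Icc 0 ((b : ℝ) - 1) :=
  ⟨k.cast_nonneg, by have : (k : ℝ) + 1 ≤ b := by exact_mod_cast h
                     linarith⟩

lemma sub_one_mul_sum_inv_pow_succ {x : ℝ} (hx : x ≠ 0) (n : ℕ) :
    (x - 1) * ∑ i : Fin n, (x ^ ((i : ℕ) + 1))⁻¹ = 1 - (x ^ n)⁻¹ := by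
  induction n with
  | zero => simp
  | succ n ih =>
    simp only [Fin.sum_univ_castSucc, Fin.val_castSucc, Fin.val_last, mul_add, ih]
    field_simp
    ring

lemma sub_one_mul_sum_inv_pow_sub {x : ℝ} (hx : x ≠ 0) (n : ℕ) :
    (x - 1) * ∑ i : Fin n, (x ^ (n - (i : ℕ)))⁻¹ = 1 - (x ^ n)⁻¹ := by
  rw [← sub_one_mul_sum_inv_pow_succ hx n]
  congr 1
  refine Fintype.sum_equiv Fin.revPerm _ _ fun i => ?_
  rw [Fin.revPerm_apply, Fin.val_rev]
  congr 2
  omega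

lemma sum_div_pow_mem_Icc {ι : Type*} [Fintype ι] {x : ℝ} (hx : 0 < x) (d : ι → ℝ) (e : ι → ℕ)
    (hd : ∀ i, d i ∈ Set.Icc 0 (x - 1)) (he : (x - 1) * ∑ i, (x ^ e i)⁻¹ ≤ 1) :
    ∑ i, d i / x ^ e i ∈ Set.Icc 0 1 := by
  refine ⟨sum_nonneg fun i _ => div_nonneg (hd i).1 (by positivity), ?_⟩
  calc ∑ i, d i / x ^ e i ≤ ∑ i, (x - 1) * (x ^ e i)⁻¹ :=
        sum_le_sum fun i _ => by rw [div_eq_mul_inv]; gcongr; exact (hd i).2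
    _ ≤ 1 := by rwa [← mul_sum]

section DigitMap

variable {b : ℕ} {σ : ℕ → ℕ}

lemma digitMap_lt (hσ : (∀ k, k < b → σ k = k) ∨ (∀ k, k < b → σ k = b - 1 - k)) {k : ℕ}
    (hk : k < b) : σ k < b := by
  rcases hσ with h | h <;> rw [h k hk] <;> omega

variable [NeZero b]

lemma expect_digitMap (hσ : (∀ k, k < b → σ k = k) ∨ (∀ k, k < b → σ k = b - 1 - k)) :
    𝔼 a : Fin b, (σ a : ℝ) = (b - 1) / 2 := by
  rcases hσ with h | h
  · simp only [h _ (Fin.isLt _), expect_fin_val]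
  · simp only [h _ (Fin.isLt _), expect_fin_reflect]

lemma covariance_digitMap (hσ : (∀ k, k < b → σ k = k) ∨ (∀ k, k < b → σ k = b - 1 - k)) :
    𝔼 a : Fin b, ((a : ℕ) : ℝ) * σ a - (𝔼 a : Fin b, ((a : ℕ) : ℝ)) * 𝔼 a : Fin b, (σ a : ℝ)
      = if ∀ k, k < b → σ k = k then ((b : ℝ) ^ 2 - 1) / 12 else -(((b : ℝ) ^ 2 - 1) / 12) := by
  rw [expect_digitMap hσ, expect_fin_val]
  split_ifs with h
  · simp only [h _ (Fin.isLt _), ← sq, expect_fin_val_sq]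
    ring
  · simp only [hσ.resolve_left h _ (Fin.isLt _), expect_fin_val_mul_reflect]
    ring

end DigitMap

section Hammersley

variable {b n : ℕ} {s : Fin n → ℕ → ℕ}

lemma sum_ite_neg_eq_aCount (c : ℝ) :
    ∑ i : Fin n, (if ∀ k, k < b → s i k = k then c else -c) = (2 * aCount b n s - n) * c := by
  have hcard :=
    card_filter_add_card_filter_not (s := univ) fun i : Fin n => ∀ k, k < b → s i k = k
  rw [card_univ, Fintype.card_fin] at hcard
  have hn : (n : ℝ) = _ := congrArg Nat.cast hcard.symm
  rw [sum_ite, sum_const, sum_const, nsmul_eq_mul, nsmul_eq_mul, aCount, hn]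
  push_cast
  ring

lemma disc_eq_expect (x₁ x₂ : ℝ) :
    disc b n s x₁ x₂ = 𝔼 t : Fin n → Fin b,
      (if z1 b n t < x₁ then (1 : ℝ) else 0) * (if z2 b n s t < x₂ then (1 : ℝ) else 0)
        - x₁ * x₂ := by
  rw [disc, Fintype.expect_eq_sum_div_card, Fintype.card_fun, Fintype.card_fin, Fintype.card_fin,
    zpow_neg, zpow_natCast]
  push_cast
  ring

variable [NeZero b]

lemma z1_mem_Icc (t : Fin n → Fin b) : z1 b n t ∈ Set.Icc 0 1 :=
  sum_div_pow_mem_Icc (Nat.cast_pos.2 (NeZero.pos b)) _ _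
    (fun i => natCast_mem_Icc_of_lt (t i).isLt)
    (by rw [sub_one_mul_sum_inv_pow_sub (NeZero.ne (b : ℝ))]; simp)

lemma z2_mem_Icc (hs : IsDigitMaps b n s) (t : Fin n → Fin b) : z2 b n s t ∈ Set.Icc 0 1 :=
  sum_div_pow_mem_Icc (Nat.cast_pos.2 (NeZero.pos b)) _ _
    (fun i => natCast_mem_Icc_of_lt (digitMap_lt (hs i) (t i).isLt))
    (by rw [sub_one_mul_sum_inv_pow_succ (NeZero.ne (b : ℝ))]; simp)

lemma expect_z1 : 𝔼 t : Fin n → Fin b, z1 b n t = (1 - ((b : ℝ) ^ n)⁻¹) / 2 := by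
  unfold z1
  rw [expect_pi_sum (fun (i : Fin n) (a : Fin b) => ((a : ℕ) : ℝ) / (b : ℝ) ^ (n - (i : ℕ)))]
  simp only [← Finset.expect_div, expect_fin_val]
  simp only [div_eq_mul_inv _ ((b : ℝ) ^ _), ← mul_sum]
  rw [← sub_one_mul_sum_inv_pow_sub (NeZero.ne (b : ℝ)) n]
  ring

lemma expect_z2 (hs : IsDigitMaps b n s) :
    𝔼 t : Fin n → Fin b, z2 b n s t = (1 - ((b : ℝ) ^ n)⁻¹) / 2 := by
  unfold z2
  rw [expect_pi_sum (fun (i : Fin n) (a : Fin b) => (s i a : ℝ) / (b : ℝ) ^ ((i : ℕ) + 1))]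
  simp only [← Finset.expect_div, expect_digitMap (hs _)]
  simp only [div_eq_mul_inv _ ((b : ℝ) ^ _), ← mul_sum]
  rw [← sub_one_mul_sum_inv_pow_succ (NeZero.ne (b : ℝ)) n]
  ring

lemma expect_z1_mul_z2 (hs : IsDigitMaps b n s) :
    𝔼 t : Fin n → Fin b, z1 b n t * z2 b n s t
      = (𝔼 t : Fin n → Fin b, z1 b n t) * (𝔼 t : Fin n → Fin b, z2 b n s t)
        + (2 * aCount b n s - n) * (((b : ℝ) ^ 2 - 1) / 12) / (b : ℝ) ^ (n + 1) := by
  have covariance_term : ∀ i : Fin n,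
      𝔼 a : Fin b,
          ((a : ℕ) : ℝ) / (b : ℝ) ^ (n - (i : ℕ)) * ((s i a : ℝ) / (b : ℝ) ^ ((i : ℕ) + 1))
        - (𝔼 a : Fin b, ((a : ℕ) : ℝ) / (b : ℝ) ^ (n - (i : ℕ)))
          * 𝔼 a : Fin b, (s i a : ℝ) / (b : ℝ) ^ ((i : ℕ) + 1)
      = (if ∀ k, k < b → s i k = k then ((b : ℝ) ^ 2 - 1) / 12 else -(((b : ℝ) ^ 2 - 1) / 12))
          / (b : ℝ) ^ (n + 1) := by
    intro i
    have hpow : (b : ℝ) ^ (n - (i : ℕ)) * (b : ℝ) ^ ((i : ℕ) + 1) = (b : ℝ) ^ (n + 1) := by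
      rw [← pow_add]; congr 1; omega
    rw [← covariance_digitMap (hs i), ← hpow]
    simp only [div_mul_div_comm, ← Finset.expect_div]
    ring
  refine (expect_pi_sum_mul_sum
    (fun (i : Fin n) (a : Fin b) => ((a : ℕ) : ℝ) / (b : ℝ) ^ (n - (i : ℕ)))
    (fun (i : Fin n) (a : Fin b) => (s i a : ℝ) / (b : ℝ) ^ ((i : ℕ) + 1))).trans ?_
  rw [sum_congr rfl fun i _ => covariance_term i, ← sum_div, sum_ite_neg_eq_aCount]
  rfl

end Hammersley

theorem integral_disc_general (b n : ℕ) (hb : 2 ≤ b)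
    (s : Fin n → ℕ → ℕ) (hs : IsDigitMaps b n s) :
    (∫ x₁ in Set.Ico (0:ℝ) 1, ∫ x₂ in Set.Ico (0:ℝ) 1, disc b n s x₁ x₂)
      = (1/4) * (b:ℝ) ^ (-2*(n:ℤ)) + (1/2) * (b:ℝ) ^ (-(n:ℤ))
        + (2 * (aCount b n s : ℝ) - (n:ℝ)) * (((b:ℝ)^2 - 1) / 12) * (b:ℝ) ^ (-(n:ℤ) - 1) := by
  have : NeZero b := ⟨by omega⟩
  have expand : 𝔼 t : Fin n → Fin b, (1 - z1 b n t) * (1 - z2 b n s t)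
      = 1 - 𝔼 t : Fin n → Fin b, z1 b n t - 𝔼 t : Fin n → Fin b, z2 b n s t
        + 𝔼 t : Fin n → Fin b, z1 b n t * z2 b n s t := by
    simp only [show ∀ u v : ℝ, (1 - u) * (1 - v) = 1 - u - v + u * v from fun u v => by ring,
      Finset.expect_add_distrib, Finset.expect_sub_distrib, Fintype.expect_const]
  simp only [disc_eq_expect]
  rw [integral_discrepancy _ _ z1_mem_Icc (z2_mem_Icc hs), expand, expect_z1_mul_z2 hs,
    expect_z1, expect_z2 hs]
  rw [show -2 * (n : ℤ) = -(n + n : ℕ) by push_cast; ring,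
    show -(n : ℤ) - 1 = -(n + 1 : ℕ) by push_cast; ring,
    zpow_neg, zpow_neg, zpow_neg, zpow_natCast, zpow_natCast, zpow_natCast, pow_add]
  field_simp
  ring

/-- Proposition 4.9: the Haar coefficient `μ_{(−1,−1),(0,0),(1,1)}`, i.e. the integral
of the discrepancy function over `[0,1)²`, equals
`(1/4)b^{−2n} + (1/2)b^{−n} + (2aₙ − n)((b²−1)/12)b^{−n−1}`. -/
theorem integral_disc (b n : ℕ) (hb : 2 ≤ b) (hn : 1 ≤ n)
    (s : Fin n → ℕ → ℕ) (hs : IsDigitMaps b n s) :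
    (∫ x₁ in Set.Ico (0:ℝ) 1, ∫ x₂ in Set.Ico (0:ℝ) 1, disc b n s x₁ x₂)
      = (1/4) * (b:ℝ) ^ (-2*(n:ℤ)) + (1/2) * (b:ℝ) ^ (-(n:ℤ))
        + (2 * (aCount b n s : ℝ) - (n:ℝ)) * (((b:ℝ)^2 - 1) / 12) * (b:ℝ) ^ (-(n:ℤ) - 1) :=
  integral_disc_general b n hb s hs
end
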